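/- arXiv:1705.01815 — 6 statements merged into one kernel-verified Lean document; each statement's English description precedes it below -/
import Mathlib

section
/- In the free product C_m * C_n of two nontrivial cyclic groups generated by a and b respectively (orders possibly infinite), for every n ≥ 2 the element ab has no n-th root; that is, there is no g with gⁿ = ab. -/
namespace StmtAux

open Monoid Monoid.CoprodI Monoid.CoprodI.NeWord

variable {ι : Type} {M : ι → Type} [∀ i, Group (M i)]

lemma prod_eq_word_prod {i j} (w : NeWord M i j) : w.prod = w.toWord.prod := rfl

lemma toList_eq_of_prod_eq [DecidableEq ι] [∀ i, DecidableEq (M i)]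
    {i j k l} {w₁ : NeWord M i j} {w₂ : NeWord M k l}
    (h : w₁.prod = w₂.prod) : w₁.toList = w₂.toList := by
  have h' : w₁.toWord.prod = w₂.toWord.prod := h
  have : w₁.toWord = w₂.toWord := Word.equiv.symm.injective h'
  exact congrArg Word.toList this

lemma head_decomp {i j} (w : NeWord M i j) :
    (∃ m : M i, m ≠ 1 ∧ i = j ∧ w.prod = CoprodI.of m ∧ w.toList.length = 1) ∨
    (∃ (k : ι) (w' : NeWord M k j) (m : M i), m ≠ 1 ∧ i ≠ k ∧
      w.prod = CoprodI.of m * w'.prod ∧ w.toList.length = w'.toList.length + 1) := by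
  induction w with
  | singleton x h => exact Or.inl ⟨x, h, rfl, (prod_singleton x h).symm ▸ rfl, rfl⟩
  | @append i j₁ k₂ j w₁ hne w₂ ih₁ ih₂ =>
    rcases ih₁ with ⟨m, hm, hij, hp, hl⟩ | ⟨k, w', m, hm, hik, hp, hl⟩
    · subst hij
      refine Or.inr ⟨k₂, w₂, m, hm, hne, ?_, ?_⟩
      · rw [append_prod, hp]
      · simp only [toList, List.length_append, hl]; omega
    · refine Or.inr ⟨k, w'.append hne w₂, m, hm, hik, ?_, ?_⟩
      · rw [append_prod, hp, mul_assoc, ← append_prod]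
      · simp only [toList, List.length_append, hl]; omega

lemma inv_toList_length {i j} (w : NeWord M i j) :
    w.inv.toList.length = w.toList.length := by
  induction w with
  | singleton x h => rfl
  | append w₁ hne w₂ ih₁ ih₂ =>
    simp only [NeWord.inv, toList, List.length_append, ih₁, ih₂]; omega

lemma last_decomp {i j} (w : NeWord M i j) :
    (∃ m : M j, m ≠ 1 ∧ i = j ∧ w.prod = CoprodI.of m ∧ w.toList.length = 1) ∨
    (∃ (k : ι) (w' : NeWord M i k) (m : M j), m ≠ 1 ∧ k ≠ j ∧
      w.prod = w'.prod * CoprodI.of m ∧ w.toList.length = w'.toList.length + 1) := by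
  rcases head_decomp w.inv with ⟨m, hm, hij, hp, hl⟩ | ⟨k, w', m, hm, hjk, hp, hl⟩
  · rw [inv_prod] at hp
    refine Or.inl ⟨m⁻¹, inv_ne_one.2 hm, hij.symm, ?_, ?_⟩
    · rw [← inv_inv w.prod, hp, map_inv]
    · rw [← inv_toList_length w]; exact hl
  · rw [inv_prod] at hp
    refine Or.inr ⟨k, w'.inv, m⁻¹, inv_ne_one.2 hm, hjk.symm, ?_, ?_⟩
    · rw [← inv_inv w.prod, hp, mul_inv_rev, inv_prod, map_inv]
    · rw [← inv_toList_length w, hl, inv_toList_length]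

lemma mul_pow_mul {G' : Type*} [Monoid G'] (x y : G') : ∀ k : ℕ, (x * y) ^ (k + 1) = x * (y * x) ^ k * y
  | 0 => by simp
  | (k + 1) => by
    rw [pow_succ, mul_pow_mul x y k, pow_succ]
    simp [mul_assoc]

lemma pow_neword {i j} (hij : i ≠ j) (w : NeWord M i j) (k : ℕ) (hk : 1 ≤ k) :
    ∃ v : NeWord M i j, v.prod = w.prod ^ k ∧ v.toList.length = k * w.toList.length := by
  induction k, hk using Nat.le_induction with
  | base => exact ⟨w, (pow_one _).symm, (one_mul _).symm⟩
  | succ k hk ih =>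
    obtain ⟨v, hv, hl⟩ := ih
    refine ⟨w.append (Ne.symm hij) v, ?_, ?_⟩
    · rw [append_prod, hv, ← pow_succ']
    · simp only [toList, List.length_append, hl, Nat.succ_mul]; omega

lemma two_le_length {i j} (hij : i ≠ j) (w : NeWord M i j) : 2 ≤ w.toList.length := by
  rcases h : w.toList with _ | ⟨x, _ | ⟨y, t⟩⟩
  · exact absurd h w.toList_ne_nil
  · exfalso
    have h1 := w.toList_head?
    have h2 := w.toList_getLast?
    rw [h] at h1 h2
    simp at h1 h2
    exact hij (congrArg Sigma.fst (h1.symm.trans h2))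
  · simp [h]

lemma key (n : ℕ) (hn : 2 ≤ n) :
    ∀ (L : ℕ) {i j : ι} (w : NeWord M i j), w.toList.length ≤ L →
      w.prod ^ n = 1 ∨
      (i = j ∧ ∃ v : NeWord M i i, v.prod = w.prod ^ n) ∨
      (i ≠ j ∧ ∃ v : NeWord M i j, v.prod = w.prod ^ n ∧ 4 ≤ v.toList.length) := by
  intro L
  induction L with
  | zero =>
    intro i j w hw
    exact absurd (List.length_eq_zero_iff.mp (Nat.le_zero.mp hw)) w.toList_ne_nil
  | succ L ih =>
    intro i j w hw
    by_cases hij : i = j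
    · subst hij
      rcases head_decomp w with ⟨m, hm, -, hp, hl⟩ | ⟨k, w₁, m₁, hm₁, hik, hp₁, hl₁⟩
      · by_cases hmn : m ^ n = 1
        · left; rw [hp, ← map_pow, hmn, map_one]
        · exact Or.inr (Or.inl ⟨rfl, NeWord.singleton (m ^ n) hmn,
            by rw [prod_singleton, hp, map_pow]⟩)
      · rcases last_decomp w₁ with ⟨m, hm, hki, -, -⟩ | ⟨s, w₂, m₂, hm₂, hsi, hp₂, hl₂⟩
        · exact absurd hki.symm hik
        · by_cases hc : m₂ * m₁ = 1
          · have hm₂' : m₂ = m₁⁻¹ := eq_inv_of_mul_eq_one_left hc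
            have hxp : w.prod = CoprodI.of m₁ * w₂.prod * (CoprodI.of m₁)⁻¹ := by
              rw [hp₁, hp₂, hm₂', map_inv, mul_assoc]
            have hpow : w.prod ^ n = CoprodI.of m₁ * w₂.prod ^ n * (CoprodI.of m₁)⁻¹ := by
              rw [hxp, conj_pow]
            have hlen2 : w₂.toList.length ≤ L := by omega
            rcases ih w₂ hlen2 with h1 | ⟨hks, v, hv⟩ | ⟨hks, v, hv, -⟩
            · left; rw [hpow, h1, mul_one, mul_inv_cancel]
            · subst hks
              refine Or.inr (Or.inl ⟨rfl, (NeWord.singleton m₁ hm₁).append hik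
                (v.append hsi (NeWord.singleton m₁⁻¹ (inv_ne_one.2 hm₁))), ?_⟩)
              rw [hpow]
              simp [append_prod, prod_singleton, hv, map_inv, mul_assoc]
            · refine Or.inr (Or.inl ⟨rfl, (NeWord.singleton m₁ hm₁).append hik
                (v.append hsi (NeWord.singleton m₁⁻¹ (inv_ne_one.2 hm₁))), ?_⟩)
              rw [hpow]
              simp [append_prod, prod_singleton, hv, map_inv, mul_assoc]
          · obtain ⟨A, hA, -⟩ := pow_neword (Ne.symm hik)
              (w₂.append hsi (NeWord.singleton (m₂ * m₁) hc)) (n - 1) (by omega)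
            refine Or.inr (Or.inl ⟨rfl, (NeWord.singleton m₁ hm₁).append hik
              (A.append hik (w₂.append hsi (NeWord.singleton m₂ hm₂))), ?_⟩)
            have hn1 : n - 1 + 1 = n := by omega
            have hxp : w.prod = CoprodI.of m₁ * (w₂.prod * CoprodI.of m₂) := by
              rw [hp₁, hp₂]
            have hyx : (w₂.prod * CoprodI.of m₂) * CoprodI.of m₁
                = (w₂.append hsi (NeWord.singleton (m₂ * m₁) hc)).prod := by
              rw [append_prod, prod_singleton, map_mul, mul_assoc]
            rw [hxp, ← hn1, mul_pow_mul, hyx, ← hA]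
            simp [append_prod, prod_singleton, mul_assoc]
    · obtain ⟨v, hv, hl⟩ := pow_neword hij w n (by omega)
      refine Or.inr (Or.inr ⟨hij, v, hv, ?_⟩)
      have h2 := two_le_length hij w
      calc (4 : ℕ) = 2 * 2 := rfl
        _ ≤ n * w.toList.length := Nat.mul_le_mul hn h2
        _ = v.toList.length := hl.symm

abbrev Fam (G H : Type) : Bool → Type := fun i => cond i G H

instance famGroup {G H : Type} [Group G] [Group H] : ∀ i, Group (Fam G H i)
  | true => inferInstanceAs (Group G)
  | false => inferInstanceAs (Group H)

def projH (G H : Type) [Group G] [Group H] : CoprodI (Fam G H) →* H :=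
  CoprodI.lift (fun i => match i with
    | true => (1 : G →* H)
    | false => MonoidHom.id H)

lemma bool_key {G H : Type} [Group G] [Group H] (a : G) (b : H) (ha : a ≠ 1) (hb : b ≠ 1)
    (n : ℕ) (hn : 2 ≤ n) (x : CoprodI (Fam G H))
    (hx : x ^ n = CoprodI.of (M := Fam G H) (i := true) a
      * CoprodI.of (M := Fam G H) (i := false) b) : False := by
  classical
  have htf : (true : Bool) ≠ false := by decide
  set cw : NeWord (Fam G H) true false :=
    (NeWord.singleton (i := true) a ha).append htf (NeWord.singleton (i := false) b hb) with hcwdef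
  have hcw : cw.prod = x ^ n := by
    rw [hx, hcwdef, append_prod, prod_singleton, prod_singleton]
  have hprojb : projH G H (x ^ n) = b := by
    rw [hx, map_mul]
    show projH G H (CoprodI.of _) * projH G H (CoprodI.of _) = b
    rw [projH, CoprodI.lift_of, CoprodI.lift_of]
    show (1 : G →* H) a * MonoidHom.id H b = b
    simp
  have hxn_ne : x ^ n ≠ 1 := by
    intro h
    rw [h, map_one] at hprojb
    exact hb hprojb.symm
  have hx1 : x ≠ 1 := fun h => hxn_ne (by rw [h, one_pow])
  have hne : Word.equiv x ≠ Word.empty := by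
    intro h
    apply hx1
    have := congrArg Word.equiv.symm h
    rwa [Equiv.symm_apply_apply] at this
  obtain ⟨i, j, w, hw⟩ := NeWord.of_word (Word.equiv x) hne
  have hwp : w.prod = x := by
    rw [prod_eq_word_prod, hw]
    exact Word.equiv.symm_apply_apply x
  rcases key n hn w.toList.length w le_rfl with h1 | ⟨hij, v, hv⟩ | ⟨hij, v, hv, h4⟩
  · rw [hwp] at h1; exact hxn_ne h1
  · have hlist : v.toList = cw.toList :=
      toList_eq_of_prod_eq (by rw [hv, hwp, ← hcw])
    have e1 : some (⟨i, v.head⟩ : Σ i, Fam G H i) = some ⟨true, cw.head⟩ := by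
      rw [← v.toList_head?, hlist, cw.toList_head?]
    have e2 : some (⟨i, v.last⟩ : Σ i, Fam G H i) = some ⟨false, cw.last⟩ := by
      rw [← v.toList_getLast?, hlist, cw.toList_getLast?]
    have hi1 : i = true := congrArg Sigma.fst (Option.some.inj e1)
    have hi2 : i = false := congrArg Sigma.fst (Option.some.inj e2)
    rw [hi1] at hi2
    exact htf hi2
  · have hlist : v.toList = cw.toList :=
      toList_eq_of_prod_eq (by rw [hv, hwp, ← hcw])
    have hcwlen : cw.toList.length = 2 := rfl
    rw [hlist, hcwlen] at h4
    omega

end StmtAux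

theorem stmt_2 {G H : Type} [Group G] [Group H] [Nontrivial G] [Nontrivial H]
    [IsCyclic G] [IsCyclic H] (a : G) (b : H)
    (ha : Subgroup.zpowers a = ⊤) (hb : Subgroup.zpowers b = ⊤)
    (n : ℕ) (hn : 2 ≤ n) :
    ¬ ∃ g : Monoid.Coprod G H, g ^ n = Monoid.Coprod.inl a * Monoid.Coprod.inr b := by
  have ha1 : a ≠ 1 := by
    rintro rfl
    obtain ⟨g, hg⟩ := exists_ne (1 : G)
    apply hg
    have hmem : g ∈ Subgroup.zpowers (1 : G) := ha ▸ Subgroup.mem_top g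
    obtain ⟨k, hk⟩ := hmem
    rw [← hk]; simp
  have hb1 : b ≠ 1 := by
    rintro rfl
    obtain ⟨g, hg⟩ := exists_ne (1 : H)
    apply hg
    have hmem : g ∈ Subgroup.zpowers (1 : H) := hb ▸ Subgroup.mem_top g
    obtain ⟨k, hk⟩ := hmem
    rw [← hk]; simp
  rintro ⟨g, hg⟩
  let φ : Monoid.Coprod G H →* Monoid.CoprodI (StmtAux.Fam G H) :=
    Monoid.Coprod.lift (Monoid.CoprodI.of (M := StmtAux.Fam G H) (i := true))
      (Monoid.CoprodI.of (M := StmtAux.Fam G H) (i := false))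
  refine StmtAux.bool_key a b ha1 hb1 n hn (φ g) ?_
  rw [← map_pow, hg, map_mul]
  rw [show φ (Monoid.Coprod.inl a) = Monoid.CoprodI.of (M := StmtAux.Fam G H) (i := true) a from
    Monoid.Coprod.lift_apply_inl _ _ _,
    show φ (Monoid.Coprod.inr b) = Monoid.CoprodI.of (M := StmtAux.Fam G H) (i := false) b from
    Monoid.Coprod.lift_apply_inr _ _ _]
end

section
/- Let G = G(Γ, 𝔭) be a graph product of cyclic groups in which the range of 𝔭 is finite, say {c₁, …, c_t}, and let p be a prime such that p > c_i for every c_i ≠ ∞. Then for every g ∈ G, the support of g is contained in the support of g^p, i.e., sp(g) ⊆ sp(g^p). -/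
def graphProdRels {V : Type} (Γ : SimpleGraph V) (𝔭 : V → ℕ) : Set (FreeGroup V) :=
  {w | (∃ v, 𝔭 v ≠ 0 ∧ w = FreeGroup.of v ^ 𝔭 v) ∨
       (∃ a b, Γ.Adj a b ∧
         w = FreeGroup.of a * FreeGroup.of b * (FreeGroup.of a)⁻¹ * (FreeGroup.of b)⁻¹)}

def GraphProduct {V : Type} (Γ : SimpleGraph V) (𝔭 : V → ℕ) : Type :=
  PresentedGroup (graphProdRels Γ 𝔭)

instance {V : Type} (Γ : SimpleGraph V) (𝔭 : V → ℕ) : Group (GraphProduct Γ 𝔭) := by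
  unfold GraphProduct; infer_instance

def GraphProduct.of {V : Type} {Γ : SimpleGraph V} {𝔭 : V → ℕ} (v : V) : GraphProduct Γ 𝔭 :=
  PresentedGroup.of v

/-- The support of an element of a graph product: the smallest set of vertices `A` such that
`g` lies in the subgroup generated by the generators from `A`. -/
def GraphProduct.sp {V : Type} {Γ : SimpleGraph V} {𝔭 : V → ℕ} (g : GraphProduct Γ 𝔭) : Set V :=
  {v | ∀ A : Set V, g ∈ Subgroup.closure (GraphProduct.of '' A) → v ∈ A}

/-!
Reduced words up to shuffling of commuting syllables form a set on which `GraphProduct Γ 𝔭` acts,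
each generator multiplying its syllable into the front of the word (van der Waerden's trick).
Acting on the empty word recovers any reduced word from the element it spells, so two reduced
words for the same element are shuffles of each other, and the support of an element is the
vertex set of any of its reduced words.

It then suffices to turn a reduced word `m` into a reduced word for `(eval m) ^ p` with the same
vertices, by induction on the length of `m`. If no vertex can be shuffled both to the front and
to the back of `m`, then `m` repeated `p` times is reduced. Otherwise let `v` be such a vertex
and pull a syllable `v ^ e` to the front. If it commutes with the rest, it splits off and
becomes `v ^ (p * e)`, which is nontrivial because `p` is a prime larger than every finite
`𝔭 v`. If not, another `v`-syllable can be shuffled to the back of the rest, so `m` is the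
conjugate by `v ^ e` of a shorter reduced word; conjugating the reduced word for its `p`-th power
back by `v ^ e` stays reduced and keeps the vertex `v`.
-/

theorem ZMod.isLeftRegular_natCast_of_lt_prime {n p : ℕ} (hp : p.Prime) (hlt : n ≠ 0 → n < p) :
    IsLeftRegular (p : ZMod n) := by
  rcases eq_or_ne n 0 with rfl | hn
  · exact (IsRegular.of_ne_zero (Int.natCast_ne_zero.mpr hp.ne_zero)).left
  · exact (ZMod.unitOfCoprime p (Nat.coprime_of_lt_prime hn (hlt hn) hp)).isUnit.isRegular.left

namespace GraphProduct

variable {V : Type} {Γ : SimpleGraph V} {𝔭 : V → ℕ}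

theorem of_pow_eq_one {v : V} (h : 𝔭 v ≠ 0) : (of v : GraphProduct Γ 𝔭) ^ 𝔭 v = 1 := by
  have := PresentedGroup.one_of_mem (rels := graphProdRels Γ 𝔭) (Or.inl ⟨v, h, rfl⟩)
  rwa [map_pow] at this

theorem commute_of {a b : V} (h : Γ.Adj a b) : Commute (of a : GraphProduct Γ 𝔭) (of b) := by
  have := PresentedGroup.one_of_mem (rels := graphProdRels Γ 𝔭) (Or.inr ⟨a, b, h, rfl⟩)
  simp only [map_mul, map_inv] at this
  exact (commutatorElement_eq_one_iff_commute (G := GraphProduct Γ 𝔭)).mp this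

/-- `of v ^ e` for `e : ZMod (𝔭 v)`; a vertex with `𝔭 v = 0` carries an infinite cyclic group,
and then `ZMod 0 = ℤ`. -/
noncomputable def ofZMod (v : V) (e : ZMod (𝔭 v)) : GraphProduct Γ 𝔭 :=
  (ZMod.lift (𝔭 v) ⟨zmultiplesHom _ (Additive.ofMul (of v : GraphProduct Γ 𝔭)), by
    rcases eq_or_ne (𝔭 v) 0 with h | h
    · simp [h]
    · rw [zmultiplesHom_apply, natCast_zsmul, ← ofMul_pow, of_pow_eq_one h]
      rfl⟩ e).toMul

theorem ofZMod_intCast (v : V) (m : ℤ) :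
    (ofZMod v m : GraphProduct Γ 𝔭) = of v ^ m := by
  simp [ofZMod, ZMod.lift_coe]

theorem ofZMod_one (v : V) : (ofZMod v 1 : GraphProduct Γ 𝔭) = of v := by
  simpa using ofZMod_intCast (Γ := Γ) v 1

theorem ofZMod_add (v : V) (e f : ZMod (𝔭 v)) :
    (ofZMod v (e + f) : GraphProduct Γ 𝔭) = ofZMod v e * ofZMod v f := by
  simp [ofZMod]

@[simp] theorem ofZMod_zero (v : V) : (ofZMod v 0 : GraphProduct Γ 𝔭) = 1 := by
  simp [ofZMod]

theorem ofZMod_neg (v : V) (e : ZMod (𝔭 v)) :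
    (ofZMod v (-e) : GraphProduct Γ 𝔭) = (ofZMod v e)⁻¹ :=
  eq_inv_of_mul_eq_one_left (by rw [← ofZMod_add, neg_add_cancel, ofZMod_zero])

theorem ofZMod_eq_zpow (v : V) (e : ZMod (𝔭 v)) :
    (ofZMod v e : GraphProduct Γ 𝔭) = of v ^ (e.cast : ℤ) := by
  rw [← ofZMod_intCast, ZMod.intCast_zmod_cast]

theorem ofZMod_pow (v : V) (e : ZMod (𝔭 v)) (k : ℕ) :
    (ofZMod v e : GraphProduct Γ 𝔭) ^ k = ofZMod v ((k : ZMod (𝔭 v)) * e) := by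
  induction k with
  | zero => simp
  | succ k ih => rw [pow_succ, ih, ← ofZMod_add]; push_cast; ring_nf

theorem commute_ofZMod {a b : V} (h : Γ.Adj a b) (x : ZMod (𝔭 a)) (y : ZMod (𝔭 b)) :
    Commute (ofZMod a x : GraphProduct Γ 𝔭) (ofZMod b y) := by
  rw [ofZMod_eq_zpow, ofZMod_eq_zpow]
  exact (commute_of h).zpow_zpow _ _

theorem ofZMod_mem_closure {A : Set V} {v : V} (hv : v ∈ A) (e : ZMod (𝔭 v)) :
    (ofZMod v e : GraphProduct Γ 𝔭) ∈ Subgroup.closure (of '' A) := by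
  rw [ofZMod_eq_zpow]
  exact Subgroup.zpow_mem _ (Subgroup.subset_closure (Set.mem_image_of_mem _ hv)) _

abbrev Syllable (𝔭 : V → ℕ) : Type := Σ v : V, ZMod (𝔭 v)

abbrev Word (𝔭 : V → ℕ) : Type := List (Syllable 𝔭)

namespace Word

variable (Γ) in
noncomputable def eval (w : Word 𝔭) : GraphProduct Γ 𝔭 :=
  (w.map fun s => ofZMod s.1 s.2).prod

@[simp] theorem eval_nil : eval Γ ([] : Word 𝔭) = 1 := rfl

@[simp] theorem eval_cons (s : Syllable 𝔭) (w : Word 𝔭) :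
    eval Γ (s :: w) = ofZMod s.1 s.2 * eval Γ w := by
  simp [eval]

@[simp] theorem eval_append (w w' : Word 𝔭) : eval Γ (w ++ w') = eval Γ w * eval Γ w' := by
  simp [eval]

def vertices (w : Word 𝔭) : Set V := {v | ∃ s ∈ w, s.1 = v}

@[simp] theorem vertices_nil : vertices ([] : Word 𝔭) = ∅ := by
  simp [vertices]

@[simp] theorem vertices_cons (s : Syllable 𝔭) (w : Word 𝔭) :
    vertices (s :: w) = insert s.1 (vertices w) := by
  ext; simp [vertices, eq_comm]

@[simp] theorem vertices_append (w w' : Word 𝔭) :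
    vertices (w ++ w') = vertices w ∪ vertices w' := by
  ext; simp [vertices, or_and_right, exists_or]

theorem vertices_eq_of_perm {w w' : Word 𝔭} (h : w.Perm w') : vertices w = vertices w' := by
  ext; simp [vertices, h.mem_iff]

variable (Γ) in
def IsFirst (v : V) (w : Word 𝔭) : Prop :=
  ∃ (w₁ : Word 𝔭) (e : ZMod (𝔭 v)) (w₂ : Word 𝔭),
    w = w₁ ++ ⟨v, e⟩ :: w₂ ∧ vertices w₁ ⊆ Γ.neighborSet v

variable (Γ) in
def IsLast (v : V) (w : Word 𝔭) : Prop :=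
  ∃ (w₁ : Word 𝔭) (e : ZMod (𝔭 v)) (w₂ : Word 𝔭),
    w = w₁ ++ ⟨v, e⟩ :: w₂ ∧ vertices w₂ ⊆ Γ.neighborSet v

@[simp] theorem not_isFirst_nil (v : V) : ¬ IsFirst Γ v ([] : Word 𝔭) := by
  simp [IsFirst]

@[simp] theorem not_isLast_nil (v : V) : ¬ IsLast Γ v ([] : Word 𝔭) := by
  simp [IsLast]

theorem isFirst_cons {v : V} {s : Syllable 𝔭} {t : Word 𝔭} :
    IsFirst Γ v (s :: t) ↔ s.1 = v ∨ (Γ.Adj v s.1 ∧ IsFirst Γ v t) := by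
  constructor
  · rintro ⟨_ | ⟨a, w₁⟩, e, w₂, h, hw₁⟩
    · cases h; exact Or.inl rfl
    · simp only [List.cons_append, List.cons.injEq] at h
      obtain ⟨rfl, rfl⟩ := h
      rw [vertices_cons, Set.insert_subset_iff] at hw₁
      exact Or.inr ⟨hw₁.1, w₁, e, w₂, rfl, hw₁.2⟩
  · rintro (h | ⟨hadj, w₁, e, w₂, rfl, hw₁⟩)
    · obtain ⟨u, e⟩ := s
      cases h
      exact ⟨[], e, t, rfl, by simp⟩
    · refine ⟨s :: w₁, e, w₂, rfl, ?_⟩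
      rw [vertices_cons]
      exact Set.insert_subset hadj hw₁

theorem isLast_cons {v : V} {s : Syllable 𝔭} {t : Word 𝔭} :
    IsLast Γ v (s :: t) ↔ (s.1 = v ∧ vertices t ⊆ Γ.neighborSet v) ∨ IsLast Γ v t := by
  constructor
  · rintro ⟨_ | ⟨a, w₁⟩, e, w₂, h, hw₂⟩
    · cases h; exact Or.inl ⟨rfl, hw₂⟩
    · simp only [List.cons_append, List.cons.injEq] at h
      obtain ⟨rfl, rfl⟩ := h
      exact Or.inr ⟨w₁, e, w₂, rfl, hw₂⟩
  · rintro (⟨h, ht⟩ | ⟨w₁, e, w₂, rfl, hw₂⟩)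
    · obtain ⟨u, e⟩ := s
      cases h
      exact ⟨[], e, t, rfl, ht⟩
    · exact ⟨s :: w₁, e, w₂, rfl, hw₂⟩

theorem isFirst_append {v : V} {X Y : Word 𝔭} :
    IsFirst Γ v (X ++ Y) ↔
      IsFirst Γ v X ∨ (vertices X ⊆ Γ.neighborSet v ∧ IsFirst Γ v Y) := by
  induction X with
  | nil => simp
  | cons s X ih =>
    simp only [List.cons_append, isFirst_cons, ih, vertices_cons, Set.insert_subset_iff]
    have : s.1 = v → ¬ Γ.Adj v s.1 := fun h => h ▸ Γ.irrefl
    tauto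

theorem isLast_append {v : V} {X Y : Word 𝔭} :
    IsLast Γ v (X ++ Y) ↔
      (IsLast Γ v X ∧ vertices Y ⊆ Γ.neighborSet v) ∨ IsLast Γ v Y := by
  induction X with
  | nil => simp
  | cons s X ih =>
    simp only [List.cons_append, isLast_cons, ih, vertices_append, Set.union_subset_iff]
    tauto

@[simp] theorem isFirst_singleton {u : V} {s : Syllable 𝔭} : IsFirst Γ u [s] ↔ s.1 = u := by
  simp [isFirst_cons]

@[simp] theorem isLast_singleton {u : V} {s : Syllable 𝔭} : IsLast Γ u [s] ↔ s.1 = u := by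
  simp [isLast_cons]

theorem IsFirst.mem_vertices {v : V} {w : Word 𝔭} (h : IsFirst Γ v w) : v ∈ vertices w := by
  obtain ⟨w₁, e, w₂, rfl, -⟩ := h
  simp

variable (Γ) in
/-- A syllable that can be shuffled next to an earlier one of the same vertex would merge with
it, so a reduced word has no such syllable (and no trivial one). -/
def Reduced : Word 𝔭 → Prop
  | [] => True
  | s :: t => s.2 ≠ 0 ∧ ¬ IsFirst Γ s.1 t ∧ Reduced t

@[simp] theorem reduced_nil : Reduced Γ ([] : Word 𝔭) := trivial

theorem reduced_cons {s : Syllable 𝔭} {t : Word 𝔭} :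
    Reduced Γ (s :: t) ↔ s.2 ≠ 0 ∧ ¬ IsFirst Γ s.1 t ∧ Reduced Γ t := Iff.rfl

@[simp] theorem reduced_singleton {s : Syllable 𝔭} : Reduced Γ [s] ↔ s.2 ≠ 0 := by
  simp [reduced_cons]

theorem reduced_append {X Y : Word 𝔭} :
    Reduced Γ (X ++ Y) ↔
      Reduced Γ X ∧ Reduced Γ Y ∧ ∀ v, IsLast Γ v X → ¬ IsFirst Γ v Y := by
  induction X with
  | nil => simp
  | cons s X ih =>
    simp only [List.cons_append, reduced_cons, ih, isFirst_append, isLast_cons]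
    constructor
    · rintro ⟨h0, h1, hX, hY, hXY⟩
      refine ⟨⟨h0, fun h => h1 (Or.inl h), hX⟩, hY, ?_⟩
      rintro v (⟨rfl, hall⟩ | hv)
      exacts [fun h => h1 (Or.inr ⟨hall, h⟩), hXY v hv]
    · rintro ⟨⟨h0, h1, hX⟩, hY, hXY⟩
      refine ⟨h0, ?_, hX, hY, fun v hv => hXY v (Or.inr hv)⟩
      rintro (h | ⟨hall, h⟩)
      exacts [h1 h, hXY s.1 (Or.inl ⟨rfl, hall⟩) h]

variable (Γ) in
inductive Swap : Word 𝔭 → Word 𝔭 → Prop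
  | head (a b : Syllable 𝔭) (t : Word 𝔭) (h : Γ.Adj a.1 b.1) :
      Swap (a :: b :: t) (b :: a :: t)
  | cons (s : Syllable 𝔭) {t t' : Word 𝔭} (h : Swap t t') : Swap (s :: t) (s :: t')

variable (Γ) in
def ShuffleEquiv : Word 𝔭 → Word 𝔭 → Prop := Relation.EqvGen (Swap Γ)

theorem Swap.perm {w w' : Word 𝔭} (h : Swap Γ w w') : w.Perm w' := by
  induction h with
  | head a b t _ => exact .swap b a t
  | cons s _ ih => exact ih.cons s

namespace ShuffleEquiv

@[simp, refl] theorem refl (w : Word 𝔭) : ShuffleEquiv Γ w w := Relation.EqvGen.refl w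

theorem symm {w w' : Word 𝔭} (h : ShuffleEquiv Γ w w') : ShuffleEquiv Γ w' w :=
  Relation.EqvGen.symm _ _ h

theorem trans {w₁ w₂ w₃ : Word 𝔭} (h : ShuffleEquiv Γ w₁ w₂)
    (h' : ShuffleEquiv Γ w₂ w₃) :
    ShuffleEquiv Γ w₁ w₃ :=
  Relation.EqvGen.trans _ _ _ h h'

theorem of_swap {w w' : Word 𝔭} (h : Swap Γ w w') : ShuffleEquiv Γ w w' := .rel _ _ h

theorem swap_head {a b : Syllable 𝔭} (h : Γ.Adj a.1 b.1) (t : Word 𝔭) :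
    ShuffleEquiv Γ (a :: b :: t) (b :: a :: t) :=
  of_swap (.head a b t h)

theorem cons (s : Syllable 𝔭) {t t' : Word 𝔭} (h : ShuffleEquiv Γ t t') :
    ShuffleEquiv Γ (s :: t) (s :: t') := by
  induction h with
  | rel _ _ h => exact of_swap (.cons s h)
  | refl => rfl
  | symm _ _ _ ih => exact ih.symm
  | trans _ _ _ _ _ ih ih' => exact ih.trans ih'

theorem append_left (u : Word 𝔭) {t t' : Word 𝔭} (h : ShuffleEquiv Γ t t') :
    ShuffleEquiv Γ (u ++ t) (u ++ t') := by
  induction u with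
  | nil => exact h
  | cons a u ih => exact ih.cons a

theorem congr {α : Sort*} (f : Word 𝔭 → α) (hf : ∀ w w', Swap Γ w w' → f w = f w')
    {w w' : Word 𝔭} (h : ShuffleEquiv Γ w w') : f w = f w' :=
  congrArg (Quot.lift f hf) (Quot.eqvGen_sound h)

theorem vertices_eq {w w' : Word 𝔭} (h : ShuffleEquiv Γ w w') : vertices w = vertices w' :=
  h.congr _ fun _ _ h => vertices_eq_of_perm h.perm

theorem length_eq {w w' : Word 𝔭} (h : ShuffleEquiv Γ w w') : w.length = w'.length :=
  h.congr _ fun _ _ h => h.perm.length_eq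

theorem eval_eq {w w' : Word 𝔭} (h : ShuffleEquiv Γ w w') : eval Γ w = eval Γ w' := by
  refine h.congr _ fun _ _ h => ?_
  induction h with
  | head a b t h => simp only [eval_cons, ← mul_assoc, (commute_ofZMod h a.2 b.2).eq]
  | cons s _ ih => simp only [eval_cons, ih]

theorem isFirst_iff {w w' : Word 𝔭} (h : ShuffleEquiv Γ w w') (v : V) :
    IsFirst Γ v w ↔ IsFirst Γ v w' := by
  refine Eq.to_iff (h.congr _ fun _ _ h => propext ?_)
  induction h with
  | head a b t h =>
    simp only [isFirst_cons]
    have := h.ne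
    constructor <;> rintro (rfl | ⟨h₁, rfl | ⟨h₂, h₃⟩⟩) <;> tauto
  | cons s _ ih => simp only [isFirst_cons, ih]

theorem reduced_iff {w w' : Word 𝔭} (h : ShuffleEquiv Γ w w') :
    Reduced Γ w ↔ Reduced Γ w' := by
  refine Eq.to_iff (h.congr _ fun _ _ h => propext ?_)
  induction h with
  | head a b t h =>
    simp only [reduced_cons, isFirst_cons]
    have := h.ne
    constructor <;> rintro ⟨h₁, h₂, h₃, h₄, h₅⟩ <;> refine ⟨h₃, ?_, h₁, ?_, h₅⟩ <;>
      tauto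
  | cons s h ih => simp only [reduced_cons, ih, (of_swap h).isFirst_iff]

end ShuffleEquiv

theorem shuffleEquiv_moveToFront {v : V} (e : ZMod (𝔭 v)) {w₁ : Word 𝔭} (w₂ : Word 𝔭)
    (h : vertices w₁ ⊆ Γ.neighborSet v) :
    ShuffleEquiv Γ (w₁ ++ ⟨v, e⟩ :: w₂) (⟨v, e⟩ :: (w₁ ++ w₂)) := by
  induction w₁ with
  | nil => rfl
  | cons a w₁ ih =>
    rw [vertices_cons, Set.insert_subset_iff] at h
    exact ((ih h.2).cons a).trans (.swap_head h.1.symm _)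

theorem shuffleEquiv_moveToBack {v : V} (e : ZMod (𝔭 v)) (w₁ : Word 𝔭) {w₂ : Word 𝔭}
    (h : vertices w₂ ⊆ Γ.neighborSet v) :
    ShuffleEquiv Γ (w₁ ++ ⟨v, e⟩ :: w₂) (w₁ ++ w₂ ++ [⟨v, e⟩]) := by
  rw [List.append_assoc]
  refine .append_left w₁ ?_
  induction w₂ with
  | nil => rfl
  | cons a w₂ ih =>
    rw [vertices_cons, Set.insert_subset_iff] at h
    exact (ShuffleEquiv.swap_head h.1 _).trans ((ih h.2).cons a)

variable (Γ) in
open Classical in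
/-- Pulls out of `w` the `v`-syllable that can be shuffled to the front, returning its exponent
and the rest of the word; `(0, w)` if there is none. -/
noncomputable def split (v : V) : Word 𝔭 → ZMod (𝔭 v) × Word 𝔭
  | [] => (0, [])
  | s :: t =>
    if h : s.1 = v then (h ▸ s.2, t)
    else if Γ.Adj v s.1 then ((split v t).1, s :: (split v t).2)
    else (0, s :: t)

@[simp] theorem split_cons_self (v : V) (e : ZMod (𝔭 v)) (t : Word 𝔭) :
    split Γ v (⟨v, e⟩ :: t) = (e, t) := by
  simp [split]

open Classical in
theorem split_cons_of_ne {v : V} {s : Syllable 𝔭} (hs : s.1 ≠ v) (t : Word 𝔭) :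
    split Γ v (s :: t) =
      if Γ.Adj v s.1 then ((split Γ v t).1, s :: (split Γ v t).2) else (0, s :: t) := by
  rw [split, dif_neg hs]

theorem split_cons_of_adj {v : V} {s : Syllable 𝔭} (h : Γ.Adj v s.1) (t : Word 𝔭) :
    split Γ v (s :: t) = ((split Γ v t).1, s :: (split Γ v t).2) := by
  rw [split_cons_of_ne h.ne', if_pos h]

theorem split_of_not_isFirst {v : V} {w : Word 𝔭} (h : ¬ IsFirst Γ v w) :
    split Γ v w = (0, w) := by
  induction w with
  | nil => rfl
  | cons s t ih =>
    rw [isFirst_cons, not_or, not_and] at h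
    rw [split_cons_of_ne h.1]
    split_ifs with hadj
    · rw [ih (h.2 hadj)]
    · rfl

theorem split_append_cons {v : V} (e : ZMod (𝔭 v)) {w₁ : Word 𝔭} (w₂ : Word 𝔭)
    (h : vertices w₁ ⊆ Γ.neighborSet v) :
    split Γ v (w₁ ++ ⟨v, e⟩ :: w₂) = (e, w₁ ++ w₂) := by
  induction w₁ with
  | nil => simp
  | cons a w₁ ih =>
    rw [vertices_cons, Set.insert_subset_iff] at h
    rw [List.cons_append, split_cons_of_adj h.1, ih h.2]
    rfl

theorem shuffleEquiv_split {v : V} {w : Word 𝔭} (h : IsFirst Γ v w) :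
    ShuffleEquiv Γ w (⟨v, (split Γ v w).1⟩ :: (split Γ v w).2) := by
  obtain ⟨w₁, e, w₂, rfl, hw₁⟩ := h
  rw [split_append_cons e w₂ hw₁]
  exact shuffleEquiv_moveToFront e w₂ hw₁

theorem eval_split (v : V) (w : Word 𝔭) :
    eval Γ w = ofZMod v (split Γ v w).1 * eval Γ (split Γ v w).2 := by
  by_cases h : IsFirst Γ v w
  · rw [(shuffleEquiv_split h).eval_eq, eval_cons]
  · simp [split_of_not_isFirst h]

theorem vertices_split_subset (v : V) (w : Word 𝔭) :
    vertices (split Γ v w).2 ⊆ vertices w := by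
  by_cases h : IsFirst Γ v w
  · rw [(shuffleEquiv_split h).vertices_eq, vertices_cons]
    exact Set.subset_insert _ _
  · rw [split_of_not_isFirst h]

theorem Reduced.split_snd {w : Word 𝔭} (hw : Reduced Γ w) (v : V) :
    ¬ IsFirst Γ v (split Γ v w).2 ∧ Reduced Γ (split Γ v w).2 := by
  by_cases h : IsFirst Γ v w
  · exact ((shuffleEquiv_split h).reduced_iff.mp hw).2
  · rw [split_of_not_isFirst h]
    exact ⟨h, hw⟩

theorem Swap.split {w w' : Word 𝔭} (h : Swap Γ w w') (v : V) :
    (split Γ v w).1 = (split Γ v w').1 ∧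
      ShuffleEquiv Γ (split Γ v w).2 (split Γ v w').2 := by
  induction h with
  | head a b t hab =>
    by_cases ha : a.1 = v
    · obtain ⟨u, x⟩ := a
      dsimp only at ha hab
      subst ha
      simp [split_cons_of_adj, hab]
    by_cases hb : b.1 = v
    · obtain ⟨u, y⟩ := b
      dsimp only at hb hab
      subst hb
      simp [split_cons_of_adj, hab.symm]
    simp only [split_cons_of_ne ha, split_cons_of_ne hb]
    split_ifs <;> exact ⟨rfl, .swap_head hab _⟩
  | cons s h ih =>
    by_cases hs : s.1 = v
    · obtain ⟨u, x⟩ := s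
      cases hs
      exact ⟨by simp, by simpa using ShuffleEquiv.of_swap h⟩
    rw [split_cons_of_ne hs, split_cons_of_ne hs]
    split_ifs
    · exact ⟨ih.1, ih.2.cons s⟩
    · exact ⟨rfl, (ShuffleEquiv.of_swap h).cons s⟩

theorem split_split {a b : V} (hab : Γ.Adj a b) (w : Word 𝔭) :
    ∃ w₃, split Γ a (split Γ b w).2 = ((split Γ a w).1, w₃) ∧
      split Γ b (split Γ a w).2 = ((split Γ b w).1, w₃) := by
  induction w with
  | nil => exact ⟨[], rfl, rfl⟩
  | cons s t ih =>
    by_cases ha : s.1 = a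
    · obtain ⟨u, x⟩ := s
      dsimp only at ha
      subst ha
      exact ⟨(split Γ b t).2, by simp [split_cons_of_adj, hab.symm],
        by simp [split_cons_of_adj, hab.symm]⟩
    by_cases hb : s.1 = b
    · obtain ⟨u, y⟩ := s
      dsimp only at hb
      subst hb
      exact ⟨(split Γ a t).2, by simp [split_cons_of_adj, hab],
        by simp [split_cons_of_adj, hab]⟩
    obtain ⟨w₃, h₁, h₂⟩ := ih
    by_cases hsa : Γ.Adj a s.1 <;> by_cases hsb : Γ.Adj b s.1
    · exact ⟨s :: w₃, by simp [split_cons_of_adj, *], by simp [split_cons_of_adj, *]⟩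
    · exact ⟨s :: (split Γ a t).2, by simp [split_cons_of_ne, *],
        by simp [split_cons_of_ne, *]⟩
    · exact ⟨s :: (split Γ b t).2, by simp [split_cons_of_ne, *],
        by simp [split_cons_of_ne, *]⟩
    · exact ⟨s :: t, by simp [split_cons_of_ne, *], by simp [split_cons_of_ne, *]⟩

open Classical in
noncomputable def consNonzero (s : Syllable 𝔭) (w : Word 𝔭) : Word 𝔭 :=
  if s.2 = 0 then w else s :: w

@[simp] theorem eval_consNonzero (s : Syllable 𝔭) (w : Word 𝔭) :
    eval Γ (consNonzero s w) = ofZMod s.1 s.2 * eval Γ w := by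
  unfold consNonzero
  split_ifs with h <;> simp [h]

theorem vertices_consNonzero_subset (s : Syllable 𝔭) (w : Word 𝔭) :
    vertices (consNonzero s w) ⊆ insert s.1 (vertices w) := by
  unfold consNonzero
  split_ifs
  exacts [Set.subset_insert _ _, (vertices_cons s w).subset]

theorem reduced_consNonzero {s : Syllable 𝔭} {w : Word 𝔭} (hw : Reduced Γ w)
    (hs : ¬ IsFirst Γ s.1 w) : Reduced Γ (consNonzero s w) := by
  unfold consNonzero
  split_ifs with h
  exacts [hw, ⟨h, hs, hw⟩]

theorem split_consNonzero_self {v : V} (x : ZMod (𝔭 v)) {w : Word 𝔭} (h : ¬ IsFirst Γ v w) :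
    split Γ v (consNonzero ⟨v, x⟩ w) = (x, w) := by
  unfold consNonzero
  split_ifs with hx
  · dsimp only at hx
    rw [split_of_not_isFirst h, hx]
  · exact split_cons_self v x w

theorem split_consNonzero_of_adj {a b : V} (hab : Γ.Adj a b) (y : ZMod (𝔭 b)) (w : Word 𝔭) :
    split Γ a (consNonzero ⟨b, y⟩ w) =
      ((split Γ a w).1, consNonzero ⟨b, y⟩ (split Γ a w).2) := by
  unfold consNonzero
  split_ifs
  · rfl
  · exact split_cons_of_adj hab w

theorem ShuffleEquiv.consNonzero (s : Syllable 𝔭) {w w' : Word 𝔭} (h : ShuffleEquiv Γ w w') :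
    ShuffleEquiv Γ (consNonzero s w) (consNonzero s w') := by
  unfold Word.consNonzero
  split_ifs
  exacts [h, h.cons s]

theorem shuffleEquiv_consNonzero_comm {a b : V} (hab : Γ.Adj a b) (x : ZMod (𝔭 a))
    (y : ZMod (𝔭 b)) (w : Word 𝔭) :
    ShuffleEquiv Γ (consNonzero ⟨a, x⟩ (consNonzero ⟨b, y⟩ w))
      (consNonzero ⟨b, y⟩ (consNonzero ⟨a, x⟩ w)) := by
  unfold consNonzero
  split_ifs <;> first | rfl | exact .swap_head hab w

variable (Γ) in
noncomputable def leftMul (v : V) (k : ZMod (𝔭 v)) (w : Word 𝔭) : Word 𝔭 :=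
  consNonzero ⟨v, k + (split Γ v w).1⟩ (split Γ v w).2

theorem eval_leftMul (v : V) (k : ZMod (𝔭 v)) (w : Word 𝔭) :
    eval Γ (leftMul Γ v k w) = ofZMod v k * eval Γ w := by
  rw [leftMul, eval_consNonzero, ofZMod_add, mul_assoc, ← eval_split]

theorem vertices_leftMul_subset (v : V) (k : ZMod (𝔭 v)) (w : Word 𝔭) :
    vertices (leftMul Γ v k w) ⊆ insert v (vertices w) :=
  (vertices_consNonzero_subset _ _).trans (Set.insert_subset_insert (vertices_split_subset v w))

theorem reduced_leftMul {w : Word 𝔭} (hw : Reduced Γ w) (v : V) (k : ZMod (𝔭 v)) :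
    Reduced Γ (leftMul Γ v k w) :=
  reduced_consNonzero (hw.split_snd v).2 (hw.split_snd v).1

theorem Reduced.leftMul_leftMul {w : Word 𝔭} (hw : Reduced Γ w) (v : V) (k l : ZMod (𝔭 v)) :
    leftMul Γ v k (leftMul Γ v l w) = leftMul Γ v (k + l) w := by
  rw [leftMul, leftMul, split_consNonzero_self _ (hw.split_snd v).1, leftMul, add_assoc]

theorem Reduced.shuffleEquiv_leftMul_zero {w : Word 𝔭} (hw : Reduced Γ w) (v : V) :
    ShuffleEquiv Γ (leftMul Γ v 0 w) w := by
  rw [leftMul, zero_add]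
  by_cases h : IsFirst Γ v w
  · rw [consNonzero, if_neg ((shuffleEquiv_split h).reduced_iff.mp hw).1]
    exact (shuffleEquiv_split h).symm
  · simp [split_of_not_isFirst h, consNonzero]

theorem Reduced.leftMul_eq_cons {s : Syllable 𝔭} {w : Word 𝔭} (h : Reduced Γ (s :: w)) :
    leftMul Γ s.1 s.2 w = s :: w := by
  rw [leftMul, split_of_not_isFirst h.2.1, add_zero, consNonzero, if_neg h.1]

theorem ShuffleEquiv.leftMul (v : V) (k : ZMod (𝔭 v)) {w w' : Word 𝔭}
    (h : ShuffleEquiv Γ w w') : ShuffleEquiv Γ (leftMul Γ v k w) (leftMul Γ v k w') := by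
  induction h with
  | rel w w' h =>
    rw [Word.leftMul, Word.leftMul, (h.split v).1]
    exact (h.split v).2.consNonzero _
  | refl => rfl
  | symm _ _ _ ih => exact ih.symm
  | trans _ _ _ _ _ ih ih' => exact ih.trans ih'

theorem shuffleEquiv_leftMul_comm {a b : V} (hab : Γ.Adj a b) (k : ZMod (𝔭 a))
    (l : ZMod (𝔭 b)) (w : Word 𝔭) :
    ShuffleEquiv Γ (leftMul Γ a k (leftMul Γ b l w)) (leftMul Γ b l (leftMul Γ a k w)) := by
  obtain ⟨w₃, h₁, h₂⟩ := split_split hab w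
  simp only [leftMul, split_consNonzero_of_adj hab, split_consNonzero_of_adj hab.symm, h₁, h₂]
  exact shuffleEquiv_consNonzero_comm hab _ _ w₃

end Word

open Word

variable (Γ 𝔭) in
def reducedWordSetoid : Setoid {w : Word 𝔭 // Reduced Γ w} where
  r x y := ShuffleEquiv Γ x.1 y.1
  iseqv := ⟨fun _ => .refl _, .symm, .trans⟩

variable (Γ 𝔭) in
abbrev NormalForm : Type := Quotient (reducedWordSetoid Γ 𝔭)

namespace NormalForm

noncomputable def leftMul (v : V) (k : ZMod (𝔭 v)) : NormalForm Γ 𝔭 → NormalForm Γ 𝔭 :=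
  Quotient.map (fun x => ⟨Word.leftMul Γ v k x.1, reduced_leftMul x.2 v k⟩)
    fun _ _ h => h.leftMul v k

theorem leftMul_leftMul (v : V) (k l : ZMod (𝔭 v)) (q : NormalForm Γ 𝔭) :
    leftMul v k (leftMul v l q) = leftMul v (k + l) q := by
  induction q using Quotient.ind with
  | _ x => exact congrArg (Quotient.mk _) (Subtype.ext (x.2.leftMul_leftMul v k l))

theorem leftMul_zero (v : V) (q : NormalForm Γ 𝔭) : leftMul v 0 q = q := by
  induction q using Quotient.ind with
  | _ x => exact Quotient.sound (x.2.shuffleEquiv_leftMul_zero v)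

variable (Γ) in
noncomputable def leftMulPerm (v : V) :
    Multiplicative (ZMod (𝔭 v)) →* Equiv.Perm (NormalForm Γ 𝔭) where
  toFun k :=
    { toFun := leftMul v k.toAdd
      invFun := leftMul v (-k.toAdd)
      left_inv q := by rw [leftMul_leftMul, neg_add_cancel, leftMul_zero]
      right_inv q := by rw [leftMul_leftMul, add_neg_cancel, leftMul_zero] }
  map_one' := Equiv.ext (leftMul_zero v)
  map_mul' k l := Equiv.ext fun q => (leftMul_leftMul v k.toAdd l.toAdd q).symm

theorem commute_leftMulPerm {a b : V} (hab : Γ.Adj a b) (x : Multiplicative (ZMod (𝔭 a)))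
    (y : Multiplicative (ZMod (𝔭 b))) : Commute (leftMulPerm Γ a x) (leftMulPerm Γ b y) := by
  refine Equiv.ext fun q => ?_
  induction q using Quotient.ind with
  | _ w => exact Quotient.sound (shuffleEquiv_leftMul_comm hab _ _ w.1)

end NormalForm

open NormalForm

noncomputable def toPerm : GraphProduct Γ 𝔭 →* Equiv.Perm (NormalForm Γ 𝔭) :=
  PresentedGroup.toGroup (f := fun v => leftMulPerm Γ v (.ofAdd 1)) (by
    rintro r (⟨v, -, rfl⟩ | ⟨a, b, hab, rfl⟩)
    · rw [map_pow, FreeGroup.lift_apply_of, ← map_pow, ← ofAdd_nsmul, nsmul_one,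
        ZMod.natCast_self, ofAdd_zero, map_one]
    · simp only [map_mul, map_inv, FreeGroup.lift_apply_of]
      exact commutatorElement_eq_one_iff_commute.mpr (commute_leftMulPerm hab _ _))

theorem toPerm_of (v : V) : toPerm (of v : GraphProduct Γ 𝔭) = leftMulPerm Γ v (.ofAdd 1) :=
  PresentedGroup.toGroup.of _

theorem toPerm_ofZMod (v : V) (e : ZMod (𝔭 v)) :
    toPerm (ofZMod v e : GraphProduct Γ 𝔭) = leftMulPerm Γ v (.ofAdd e) := by
  rw [ofZMod_eq_zpow, map_zpow, toPerm_of, ← map_zpow, ← ofAdd_zsmul, zsmul_one,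
    ZMod.intCast_zmod_cast]

theorem toPerm_eval {w : Word 𝔭} (hw : Reduced Γ w) :
    toPerm (eval Γ w) (Quotient.mk _ ⟨[], reduced_nil⟩) =
      (Quotient.mk _ ⟨w, hw⟩ : NormalForm Γ 𝔭) := by
  induction w with
  | nil => rfl
  | cons s w ih =>
    rw [eval_cons, map_mul, Equiv.Perm.mul_apply, ih hw.2.2, toPerm_ofZMod]
    exact congrArg (Quotient.mk _) (Subtype.ext hw.leftMul_eq_cons)

theorem Word.shuffleEquiv_of_eval_eq {w w' : Word 𝔭} (hw : Reduced Γ w) (hw' : Reduced Γ w')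
    (h : eval Γ w = eval Γ w') : ShuffleEquiv Γ w w' :=
  Quotient.exact ((toPerm_eval hw).symm.trans (h ▸ toPerm_eval hw'))

namespace Word

theorem exists_reduced (u : Word 𝔭) :
    ∃ w, Reduced Γ w ∧ eval Γ w = eval Γ u ∧ vertices w ⊆ vertices u := by
  induction u with
  | nil => exact ⟨[], reduced_nil, rfl, subset_rfl⟩
  | cons s u ih =>
    obtain ⟨w, hw, heval, hvert⟩ := ih
    refine ⟨leftMul Γ s.1 s.2 w, reduced_leftMul hw _ _, ?_, ?_⟩
    · rw [eval_leftMul, heval, eval_cons]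
    · exact (vertices_leftMul_subset _ _ _).trans (by simpa using Set.insert_subset_insert hvert)

theorem eval_mem_closure {A : Set V} {u : Word 𝔭} (h : vertices u ⊆ A) :
    eval Γ u ∈ Subgroup.closure (of '' A) := by
  induction u with
  | nil => exact Subgroup.one_mem _
  | cons s u ih =>
    rw [vertices_cons, Set.insert_subset_iff] at h
    exact Subgroup.mul_mem _ (ofZMod_mem_closure h.1 s.2) (ih h.2)

theorem exists_eval_eq_of_mem_closure {A : Set V} {g : GraphProduct Γ 𝔭}
    (h : g ∈ Subgroup.closure (of '' A)) :
    ∃ u : Word 𝔭, vertices u ⊆ A ∧ eval Γ u = g := by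
  induction h using Subgroup.closure_induction'' with
  | mem _ hx =>
    obtain ⟨v, hv, rfl⟩ := hx
    exact ⟨[⟨v, 1⟩], by simpa using hv, by simp [ofZMod_one]⟩
  | inv_mem _ hx =>
    obtain ⟨v, hv, rfl⟩ := hx
    exact ⟨[⟨v, -1⟩], by simpa using hv, by simp [ofZMod_neg, ofZMod_one]⟩
  | one => exact ⟨[], by simp, rfl⟩
  | mul _ _ _ _ ihx ihy =>
    obtain ⟨u₁, hu₁, rfl⟩ := ihx
    obtain ⟨u₂, hu₂, rfl⟩ := ihy
    exact ⟨u₁ ++ u₂, by simp [hu₁, hu₂], eval_append _ _⟩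

theorem exists_reduced_eval_eq (g : GraphProduct Γ 𝔭) :
    ∃ w : Word 𝔭, Reduced Γ w ∧ eval Γ w = g := by
  have hclosure : Subgroup.closure (Set.range (of : V → GraphProduct Γ 𝔭)) = ⊤ :=
    PresentedGroup.closure_range_of _
  have : g ∈ Subgroup.closure (of '' Set.univ) := by
    rw [Set.image_univ, hclosure]
    trivial
  obtain ⟨u, -, rfl⟩ := exists_eval_eq_of_mem_closure this
  obtain ⟨w, hw, heval, -⟩ := exists_reduced (Γ := Γ) u
  exact ⟨w, hw, heval⟩

theorem Reduced.vertices_subset_of_mem_closure {w : Word 𝔭} (hw : Reduced Γ w) {A : Set V}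
    (h : eval Γ w ∈ Subgroup.closure (of '' A)) : vertices w ⊆ A := by
  obtain ⟨u, huA, hu⟩ := exists_eval_eq_of_mem_closure h
  obtain ⟨w', hw', heval, hw'u⟩ := exists_reduced (Γ := Γ) u
  rw [(shuffleEquiv_of_eval_eq hw hw' (heval.trans hu).symm).vertices_eq]
  exact hw'u.trans huA

theorem Reduced.sp_eval {w : Word 𝔭} (hw : Reduced Γ w) : sp (eval Γ w) = vertices w :=
  Set.Subset.antisymm (fun _ hv => hv _ (eval_mem_closure subset_rfl))
    fun _ hv _ hA => hw.vertices_subset_of_mem_closure hA hv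

theorem commute_ofZMod_eval {v : V} (e : ZMod (𝔭 v)) {w : Word 𝔭}
    (h : vertices w ⊆ Γ.neighborSet v) : Commute (ofZMod v e) (eval Γ w) := by
  induction w with
  | nil => exact Commute.one_right _
  | cons s w ih =>
    rw [vertices_cons, Set.insert_subset_iff] at h
    exact (commute_ofZMod h.1 e s.2).mul_right (ih h.2)

theorem reduced_append_singleton {X : Word 𝔭} {v : V} {f : ZMod (𝔭 v)}
    (h : Reduced Γ (X ++ [⟨v, f⟩])) : Reduced Γ X ∧ f ≠ 0 ∧ ¬ IsLast Γ v X := by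
  obtain ⟨hX, hf, hXf⟩ := reduced_append.mp h
  exact ⟨hX, reduced_singleton.mp hf, fun hv => hXf v hv (isFirst_singleton.mpr rfl)⟩

theorem IsLast.exists_shuffleEquiv {v : V} {X : Word 𝔭} (h : IsLast Γ v X) :
    ∃ X' f, ShuffleEquiv Γ X (X' ++ [⟨v, f⟩]) ∧ X'.length + 1 = X.length := by
  obtain ⟨w₁, f, w₂, rfl, hw₂⟩ := h
  exact ⟨w₁ ++ w₂, f, shuffleEquiv_moveToBack f w₁ hw₂, by simp; omega⟩

theorem isLast_split_or_subset {v : V} {m : Word 𝔭} (hfirst : IsFirst Γ v m)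
    (hlast : IsLast Γ v m) :
    IsLast Γ v (split Γ v m).2 ∨ vertices (split Γ v m).2 ⊆ Γ.neighborSet v := by
  obtain ⟨w₁, e, w₂, rfl, hw₁⟩ := hfirst
  rw [split_append_cons e w₂ hw₁, isLast_append, vertices_append, Set.union_subset_iff]
  rw [isLast_append, isLast_cons] at hlast
  rcases hlast with ⟨-, hsub⟩ | ⟨-, hw₂⟩ | hw₂
  · exact absurd (hsub (by simp : v ∈ vertices (⟨v, e⟩ :: w₂))) Γ.irrefl
  · exact Or.inr ⟨hw₁, hw₂⟩
  · exact Or.inl (Or.inr hw₂)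

open Classical in
noncomputable def snocNonzero (X : Word 𝔭) (s : Syllable 𝔭) : Word 𝔭 :=
  if s.2 = 0 then X else X ++ [s]

@[simp] theorem eval_snocNonzero (X : Word 𝔭) (s : Syllable 𝔭) :
    eval Γ (snocNonzero X s) = eval Γ X * ofZMod s.1 s.2 := by
  unfold snocNonzero
  split_ifs with h <;> simp [h]

theorem length_snocNonzero_le (X : Word 𝔭) (s : Syllable 𝔭) :
    (snocNonzero X s).length ≤ X.length + 1 := by
  unfold snocNonzero
  split_ifs <;> simp

theorem vertices_subset_snocNonzero (X : Word 𝔭) (s : Syllable 𝔭) :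
    vertices X ⊆ vertices (snocNonzero X s) := by
  unfold snocNonzero
  split_ifs
  exacts [subset_rfl, by simp]

theorem insert_vertices_snocNonzero (X : Word 𝔭) (v : V) (f : ZMod (𝔭 v)) :
    insert v (vertices (snocNonzero X ⟨v, f⟩)) = insert v (vertices X) := by
  unfold snocNonzero
  split_ifs <;> simp [Set.union_singleton]

theorem isFirst_snocNonzero {u v : V} {X : Word 𝔭} {f : ZMod (𝔭 v)} :
    IsFirst Γ u (snocNonzero X ⟨v, f⟩) ↔
      IsFirst Γ u X ∨ (f ≠ 0 ∧ vertices X ⊆ Γ.neighborSet u ∧ v = u) := by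
  unfold snocNonzero
  split_ifs with hf
  · dsimp only at hf
    simp [hf]
  · simp [isFirst_append, hf, and_comm]

theorem reduced_snocNonzero {v : V} {X : Word 𝔭} (hX : Reduced Γ X) (hlast : ¬ IsLast Γ v X)
    (f : ZMod (𝔭 v)) : Reduced Γ (snocNonzero X ⟨v, f⟩) := by
  unfold snocNonzero
  split_ifs with hf
  · exact hX
  · refine reduced_append.mpr ⟨hX, reduced_singleton.mpr hf, fun u hu hfirst => ?_⟩
    rw [isFirst_singleton] at hfirst
    dsimp only at hfirst
    exact hlast (hfirst ▸ hu)

theorem exists_reduced_conj {v : V} {e : ZMod (𝔭 v)} (he : e ≠ 0) {X : Word 𝔭}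
    (hX : Reduced Γ X) (hfirst : ¬ IsFirst Γ v X) (hblock : ¬ vertices X ⊆ Γ.neighborSet v) :
    ∃ Y, Reduced Γ Y ∧ eval Γ Y = ofZMod v e * eval Γ X * ofZMod v (-e) ∧
      vertices Y = insert v (vertices X) ∧
      ∀ u, IsFirst Γ u Y → v = u ∨ (Γ.Adj u v ∧ IsFirst Γ u X) := by
  obtain ⟨X', f, hXX', hX', hlast⟩ : ∃ X' f, ShuffleEquiv Γ X (snocNonzero X' ⟨v, f⟩) ∧
      Reduced Γ X' ∧ ¬ IsLast Γ v X' := by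
    by_cases h : IsLast Γ v X
    · obtain ⟨X', f, hsh, -⟩ := h.exists_shuffleEquiv
      obtain ⟨hX', hf, hlast⟩ := reduced_append_singleton (hsh.reduced_iff.mp hX)
      exact ⟨X', f, by rwa [snocNonzero, if_neg hf], hX', hlast⟩
    · exact ⟨X, 0, by simp [snocNonzero], hX, h⟩
  have hfirst' : ¬ IsFirst Γ v X' ∧ ¬ (f ≠ 0 ∧ vertices X' ⊆ Γ.neighborSet v) := by
    simpa [isFirst_snocNonzero] using (hXX'.isFirst_iff v).not.mp hfirst
  have hblock' : ¬ vertices X' ⊆ Γ.neighborSet v := by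
    intro hsub
    by_cases hf : f = 0
    · rw [hXX'.vertices_eq, snocNonzero, if_pos hf] at hblock
      exact hblock hsub
    · exact hfirst'.2 ⟨hf, hsub⟩
  refine ⟨⟨v, e⟩ :: snocNonzero X' ⟨v, f - e⟩, ⟨he, ?_, reduced_snocNonzero hX' hlast _⟩,
    ?_, ?_, ?_⟩
  · simpa [isFirst_snocNonzero, hfirst'.1] using fun _ => hblock'
  · simp [hXX'.eval_eq, sub_eq_add_neg, ofZMod_add, mul_assoc]
  · rw [vertices_cons, insert_vertices_snocNonzero, hXX'.vertices_eq, insert_vertices_snocNonzero]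
  · intro u hu
    rcases isFirst_cons.mp hu with h | ⟨hadj, hu⟩
    · exact Or.inl h
    rcases isFirst_snocNonzero.mp hu with hu | ⟨-, -, rfl⟩
    · exact Or.inr ⟨hadj, (hXX'.isFirst_iff u).mpr (isFirst_snocNonzero.mpr (Or.inl hu))⟩
    · exact absurd hadj Γ.irrefl

theorem exists_conj_shorter {v : V} {e : ZMod (𝔭 v)} {m : Word 𝔭}
    (hm : Reduced Γ (⟨v, e⟩ :: m)) (hlast : IsLast Γ v m) :
    ∃ m', m'.length ≤ m.length ∧ Reduced Γ m' ∧
      eval Γ (⟨v, e⟩ :: m) = ofZMod v e * eval Γ m' * ofZMod v (-e) ∧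
      vertices (⟨v, e⟩ :: m) = insert v (vertices m') ∧
      ¬ IsFirst Γ v m' ∧ ¬ vertices m' ⊆ Γ.neighborSet v ∧
      ∀ u, Γ.Adj u v → IsFirst Γ u m' → IsFirst Γ u (⟨v, e⟩ :: m) := by
  obtain ⟨m₂, f, hsh, hlen⟩ := hlast.exists_shuffleEquiv
  obtain ⟨hm₂, hf, hlast₂⟩ := reduced_append_singleton (hsh.reduced_iff.mp hm.2.2)
  have hfirst : ¬ IsFirst Γ v m₂ ∧ ¬ vertices m₂ ⊆ Γ.neighborSet v := by
    simpa [isFirst_append] using (hsh.isFirst_iff v).not.mp hm.2.1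
  refine ⟨snocNonzero m₂ ⟨v, f + e⟩, (length_snocNonzero_le _ _).trans hlen.le,
    reduced_snocNonzero hm₂ hlast₂ _, ?_, ?_, ?_, ?_, ?_⟩
  · simp [hsh.eval_eq, ofZMod_add, ofZMod_neg, mul_assoc]
  · simp [hsh.vertices_eq, insert_vertices_snocNonzero, Set.union_singleton]
  · simpa [isFirst_snocNonzero, hfirst.1] using fun _ => hfirst.2
  · exact fun h => hfirst.2 ((vertices_subset_snocNonzero _ _).trans h)
  · intro u hadj hu
    rcases isFirst_snocNonzero.mp hu with hu | ⟨-, -, rfl⟩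
    · refine isFirst_cons.mpr (Or.inr ⟨hadj, (hsh.isFirst_iff u).mpr ?_⟩)
      exact isFirst_append.mpr (Or.inl hu)
    · exact isFirst_cons.mpr (Or.inl rfl)

variable (Γ) in
/-- The last condition is what lets the induction in `exists_isReducedPow` pass through
conjugations. -/
def IsReducedPow (p : ℕ) (m W : Word 𝔭) : Prop :=
  Reduced Γ W ∧ eval Γ W = eval Γ m ^ p ∧ vertices W = vertices m ∧
    ∀ u, IsFirst Γ u W → IsFirst Γ u m

variable {p : ℕ}

theorem IsReducedPow.of_shuffleEquiv {m m' W : Word 𝔭} (h : ShuffleEquiv Γ m m')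
    (hW : IsReducedPow Γ p m' W) : IsReducedPow Γ p m W := by
  obtain ⟨hW, heval, hvert, hfirst⟩ := hW
  exact ⟨hW, by rw [heval, h.eval_eq], by rw [hvert, h.vertices_eq],
    fun u hu => (h.isFirst_iff u).mpr (hfirst u hu)⟩

theorem isReducedPow_flatten_replicate {m : Word 𝔭} (hm : Reduced Γ m)
    (hcyc : ∀ v, IsFirst Γ v m → ¬ IsLast Γ v m) (k : ℕ) :
    IsReducedPow Γ (k + 1) m (List.replicate (k + 1) m).flatten := by
  induction k with
  | zero => simpa [IsReducedPow] using hm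
  | succ k ih =>
    obtain ⟨hW, heval, hvert, hfirst⟩ := ih
    rw [List.replicate_succ, List.flatten_cons]
    refine ⟨reduced_append.mpr ⟨hm, hW, fun v hv h => hcyc v (hfirst v h) hv⟩, ?_, ?_, ?_⟩
    · rw [eval_append, heval, ← pow_succ']
    · rw [vertices_append, hvert, Set.union_self]
    · intro u hu
      rcases isFirst_append.mp hu with hu | ⟨-, hu⟩
      exacts [hu, hfirst u hu]

theorem IsReducedPow.cons_of_subset {v : V} {e : ZMod (𝔭 v)} {m W : Word 𝔭}
    (hp : IsLeftRegular (p : ZMod (𝔭 v))) (he : e ≠ 0) (hW : IsReducedPow Γ p m W)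
    (hcentral : vertices m ⊆ Γ.neighborSet v) :
    IsReducedPow Γ p (⟨v, e⟩ :: m) (⟨v, p * e⟩ :: W) := by
  obtain ⟨hW, heval, hvert, hfirst⟩ := hW
  have hv : v ∉ vertices W := hvert ▸ fun h => Γ.irrefl (hcentral h)
  refine ⟨⟨hp.mul_left_eq_zero_iff.not.mpr he, fun h => hv h.mem_vertices, hW⟩,
    ?_, ?_, ?_⟩
  · rw [eval_cons, eval_cons, heval, (commute_ofZMod_eval e hcentral).mul_pow, ofZMod_pow]
  · rw [vertices_cons, vertices_cons, hvert]
  · intro u hu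
    rcases isFirst_cons.mp hu with h | ⟨hadj, hu⟩
    exacts [isFirst_cons.mpr (Or.inl h), isFirst_cons.mpr (Or.inr ⟨hadj, hfirst u hu⟩)]

theorem IsReducedPow.conj {v : V} {e : ZMod (𝔭 v)} {m m' W' : Word 𝔭} (he : e ≠ 0)
    (hW' : IsReducedPow Γ p m' W') (hfirst : ¬ IsFirst Γ v m')
    (hblock : ¬ vertices m' ⊆ Γ.neighborSet v)
    (heval : eval Γ m = ofZMod v e * eval Γ m' * ofZMod v (-e))
    (hvert : vertices m = insert v (vertices m')) (hv : IsFirst Γ v m)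
    (hu : ∀ u, Γ.Adj u v → IsFirst Γ u m' → IsFirst Γ u m) :
    ∃ W, IsReducedPow Γ p m W := by
  obtain ⟨hW', heval', hvert', hfirst'⟩ := hW'
  obtain ⟨Y, hY, hYeval, hYvert, hYfirst⟩ :=
    exists_reduced_conj he hW' (fun h => hfirst (hfirst' v h)) (hvert' ▸ hblock)
  refine ⟨Y, hY, ?_, by rw [hYvert, hvert', hvert], fun u h => ?_⟩
  · rw [hYeval, heval', heval, ofZMod_neg, conj_pow]
  · rcases hYfirst u h with rfl | ⟨hadj, h⟩
    exacts [hv, hu u hadj (hfirst' u h)]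

theorem exists_isReducedPow (hp : p ≠ 0) (hreg : ∀ v, IsLeftRegular (p : ZMod (𝔭 v)))
    {m : Word 𝔭} (hm : Reduced Γ m) : ∃ W, IsReducedPow Γ p m W := by
  induction hlen : m.length using Nat.strong_induction_on generalizing m with
  | _ n ih =>
  by_cases hcyc : ∀ v, IsFirst Γ v m → ¬ IsLast Γ v m
  · obtain ⟨k, rfl⟩ := Nat.exists_eq_add_one_of_ne_zero hp
    exact ⟨_, isReducedPow_flatten_replicate hm hcyc k⟩
  obtain ⟨v, hfirst, hlast⟩ : ∃ v, IsFirst Γ v m ∧ IsLast Γ v m := by simpa using hcyc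
  have hsplit := shuffleEquiv_split hfirst
  have hm₁ := hsplit.reduced_iff.mp hm
  have hlen₁ : (split Γ v m).2.length < n := by simp [← hlen, hsplit.length_eq]
  suffices ∃ W, IsReducedPow Γ p (⟨v, (split Γ v m).1⟩ :: (split Γ v m).2) W from
    this.imp fun W hW => hW.of_shuffleEquiv hsplit
  rcases isLast_split_or_subset hfirst hlast with hlast₁ | hcentral
  · obtain ⟨m', hlen', hm', heval, hvert, hfirst', hblock', hu⟩ :=
      exists_conj_shorter hm₁ hlast₁
    obtain ⟨W', hW'⟩ := ih _ (hlen'.trans_lt hlen₁) hm' rfl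
    exact hW'.conj hm₁.1 hfirst' hblock' heval hvert (isFirst_cons.mpr (Or.inl rfl)) hu
  · obtain ⟨W, hW⟩ := ih _ hlen₁ hm₁.2.2 rfl
    exact ⟨_, hW.cons_of_subset (hreg v) hm₁.1 hcentral⟩

end Word

end GraphProduct

theorem stmt_3_general {V : Type} (Γ : SimpleGraph V) (𝔭 : V → ℕ)
    (p : ℕ) (hp : p.Prime) (hgt : ∀ v, 𝔭 v ≠ 0 → 𝔭 v < p)
    (g : GraphProduct Γ 𝔭) :
    GraphProduct.sp g ⊆ GraphProduct.sp (g ^ p) := by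
  obtain ⟨m, hm, rfl⟩ := GraphProduct.Word.exists_reduced_eval_eq g
  obtain ⟨W, hW, heval, hvert, -⟩ := GraphProduct.Word.exists_isReducedPow hp.ne_zero
    (fun v => ZMod.isLeftRegular_natCast_of_lt_prime hp (hgt v)) hm
  rw [← heval, hW.sp_eval, hm.sp_eval, hvert]

theorem stmt_3 {V : Type} (Γ : SimpleGraph V) (𝔭 : V → ℕ)
    (h𝔭 : ∀ v, 𝔭 v = 0 ∨ IsPrimePow (𝔭 v)) (hfin : (Set.range 𝔭).Finite)
    (p : ℕ) (hp : p.Prime) (hgt : ∀ v, 𝔭 v ≠ 0 → 𝔭 v < p)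
    (g : GraphProduct Γ 𝔭) :
    GraphProduct.sp g ⊆ GraphProduct.sp (g ^ p) :=
  stmt_3_general Γ 𝔭 p hp hgt g
end

section
/- Let G = G(Γ, 𝔭) be a graph product of cyclic groups, g ∈ G, and let a₁, a₂, b₁, b₂ ∈ Γ − sp(g) be four distinct vertices such that a₁ is not adjacent to b₁ and a₂ is not adjacent to b₂. Then for every n ≥ 2 the element g·a₁⁻¹a₂b₁⁻¹b₂ has no n-th root in G. -/
/-
Since `a₁` and `b₁` are not adjacent, sending `a₁` and `b₁` to generators of their vertex groups
`ℤ/𝔭(a₁)` and `ℤ/𝔭(b₁)` and every other vertex to `1` defines a homomorphism `φ` into the free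
product of the vertex groups. Avoiding `a₁` in its support, `g` is sent into the factor of `b₁`;
avoiding `b₁`, into the factor of `a₁`; so `φ g = 1`, and an `n`-th root of the given element would
give an `n`-th root of `a₁⁻¹ b₁⁻¹` in the free product. These vertex groups are nontrivial because
`𝔭` never takes the value `1`.

In a free product a product `u v` of nontrivial elements of distinct factors is not a proper power.
Write `x` as a reduced word: if its first and last letters lie in distinct factors, the reduced
form of `x ^ n` is `n` copies of it, so it is too long; otherwise, by induction on the length,
`x ^ n` is trivial or its reduced form begins and ends in the same factor as `x`.
-/

namespace Monoid.CoprodI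

variable {ι : Type*}

namespace NeWord

section Monoid

variable {M : ι → Type*} [∀ i, Monoid (M i)]

theorem head_ne_one {i j : ι} (w : NeWord M i j) : w.head ≠ 1 := by
  induction w with
  | singleton x hx => exact hx
  | append _ _ _ ih _ => exact ih

theorem last_ne_one {i j : ι} (w : NeWord M i j) : w.last ≠ 1 := by
  induction w with
  | singleton x hx => exact hx
  | append _ _ _ _ ih => exact ih

theorem two_le_length_toList {i j : ι} (w : NeWord M i j) (hij : i ≠ j) :
    2 ≤ w.toList.length := by
  cases w with
  | singleton => exact absurd rfl hij
  | append w₁ _ w₂ =>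
    have h₁ := List.length_pos_of_ne_nil w₁.toList_ne_nil
    have h₂ := List.length_pos_of_ne_nil w₂.toList_ne_nil
    simp only [toList, List.length_append]
    omega

theorem toList_eq_of_prod_eq {i j k l : ι} {w₁ : NeWord M i j} {w₂ : NeWord M k l}
    (h : w₁.prod = w₂.prod) : w₁.toList = w₂.toList := by
  classical
  exact congrArg Word.toList (Word.equiv.symm.injective h)

theorem idx_eq_of_prod_eq {i j k l : ι} {w₁ : NeWord M i j} {w₂ : NeWord M k l}
    (h : w₁.prod = w₂.prod) : i = k ∧ j = l := by
  have h' := toList_eq_of_prod_eq h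
  have h₁ := congrArg List.head? h'
  have h₂ := congrArg List.getLast? h'
  simp only [toList_head?, toList_getLast?, Option.some.injEq, Sigma.mk.injEq] at h₁ h₂
  exact ⟨h₁.1, h₂.1⟩

theorem prod_ne_one {i j : ι} (w : NeWord M i j) : w.prod ≠ 1 := by
  classical
  intro h
  have hw : w.toWord = Word.empty :=
    Word.equiv.symm.injective (h.trans Word.prod_empty.symm : w.toWord.prod = Word.empty.prod)
  exact w.toList_ne_nil (congrArg Word.toList hw)

theorem exists_prod_of_ne_one {x : CoprodI M} (hx : x ≠ 1) :
    ∃ (i j : ι) (w : NeWord M i j), w.prod = x := by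
  classical
  obtain ⟨i, j, w, hw⟩ := of_word (Word.equiv x) fun h => hx <| by
    rw [← Word.equiv.symm_apply_apply x, h]; exact Word.prod_empty
  exact ⟨i, j, w, by rw [prod, hw]; exact Word.equiv.symm_apply_apply x⟩

theorem length_eq_one_or_exists_prod_eq_of_head_mul {i j : ι} (w : NeWord M i j) :
    (i = j ∧ w.toList.length = 1 ∧ w.prod = of w.head) ∨
      ∃ (k : ι) (w' : NeWord M k j), i ≠ k ∧ w'.toList.length < w.toList.length ∧
        w.prod = of w.head * w'.prod := by
  induction w with
  | singleton x hx => exact Or.inl ⟨rfl, rfl, prod_singleton x hx⟩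
  | @append i j k l w₁ hjk w₂ ih _ =>
    right
    rcases ih with ⟨rfl, hlen, hprod⟩ | ⟨m, w', him, hlen, hprod⟩
    · refine ⟨k, w₂, hjk, ?_, by rw [append_prod, hprod, append_head]⟩
      simp only [toList, List.length_append, hlen]
      omega
    · refine ⟨m, append w' hjk w₂, him, ?_,
        by rw [append_prod, append_prod, hprod, mul_assoc]; rfl⟩
      simp only [toList, List.length_append]
      omega

theorem length_eq_one_or_exists_prod_eq_mul_of_last {i j : ι} (w : NeWord M i j) :
    (i = j ∧ w.toList.length = 1 ∧ w.prod = of w.last) ∨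
      ∃ (k : ι) (w' : NeWord M i k), k ≠ j ∧ w'.toList.length < w.toList.length ∧
        w.prod = w'.prod * of w.last := by
  induction w with
  | singleton x hx => exact Or.inl ⟨rfl, rfl, prod_singleton x hx⟩
  | @append i j k l w₁ hjk w₂ _ ih =>
    right
    rcases ih with ⟨rfl, hlen, hprod⟩ | ⟨m, w', hml, hlen, hprod⟩
    · refine ⟨j, w₁, hjk, ?_, by rw [append_prod, hprod, append_last]⟩
      simp only [toList, List.length_append, hlen]
      omega
    · refine ⟨m, append w₁ hjk w', hml, ?_,
        by rw [append_prod, append_prod, hprod, mul_assoc]; rfl⟩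
      simp only [toList, List.length_append]
      omega

def powAppend {i j l : ι} (c : NeWord M i j) (hji : j ≠ i) (w : NeWord M i l) :
    ℕ → NeWord M i l
  | 0 => w
  | n + 1 => append c hji (powAppend c hji w n)

theorem prod_powAppend {i j l : ι} (c : NeWord M i j) (hji : j ≠ i) (w : NeWord M i l)
    (n : ℕ) : (c.powAppend hji w n).prod = c.prod ^ n * w.prod := by
  induction n with
  | zero => rw [powAppend, pow_zero, one_mul]
  | succ n ih => rw [powAppend, append_prod, ih, pow_succ', mul_assoc]

theorem length_toList_powAppend {i j l : ι} (c : NeWord M i j) (hji : j ≠ i)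
    (w : NeWord M i l) (n : ℕ) :
    (c.powAppend hji w n).toList.length = n * c.toList.length + w.toList.length := by
  induction n with
  | zero => simp [powAppend]
  | succ n ih => simp only [powAppend, toList, List.length_append, ih]; ring

theorem exists_prod_eq_pow_of_ne {i j : ι} (w : NeWord M i j) (hij : i ≠ j) {n : ℕ}
    (hn : n ≠ 0) :
    ∃ w' : NeWord M i j, w'.prod = w.prod ^ n ∧ w'.toList.length = n * w.toList.length := by
  obtain ⟨k, rfl⟩ := Nat.exists_eq_succ_of_ne_zero hn
  exact ⟨w.powAppend hij.symm w k, by rw [prod_powAppend, pow_succ],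
    by rw [length_toList_powAppend, Nat.succ_mul]⟩

end Monoid

section Group

variable {G : ι → Type*} [∀ i, Group (G i)]

theorem pow_eq_one_or_exists_prod_eq_pow {i j : ι} (w : NeWord G i j) {n : ℕ} (hn : n ≠ 0) :
    w.prod ^ n = 1 ∨ ∃ w' : NeWord G i j, w'.prod = w.prod ^ n := by
  induction hN : w.toList.length using Nat.strong_induction_on generalizing i j with
  | _ N ih =>
  obtain rfl | hij := eq_or_ne i j
  swap
  · exact Or.inr ((w.exists_prod_eq_pow_of_ne hij hn).imp fun _ h => h.1)
  rcases w.length_eq_one_or_exists_prod_eq_of_head_mul with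
    ⟨-, -, hw⟩ | ⟨k, w', hik, hlen', hw⟩
  · by_cases h : w.head ^ n = 1
    · left; rw [hw, ← map_pow, h, map_one]
    · right; exact ⟨singleton _ h, by rw [prod_singleton, hw, map_pow]⟩
  rcases w'.length_eq_one_or_exists_prod_eq_mul_of_last with
    ⟨rfl, -, -⟩ | ⟨a, m, hai, hlen'', hw'⟩
  · exact absurd rfl hik
  set s := w.head
  set t := w'.last
  -- `w = s m t`: if `t s = 1` then `w` is conjugate to the shorter word `m`; otherwise
  -- `w ^ (n + 1) = s (m (t s)) ^ n m t` is already reduced.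
  have hprod : w.prod = of s * m.prod * of t := by rw [hw, hw', mul_assoc]
  by_cases hts : t * s = 1
  · have hpow : w.prod ^ n = (of t)⁻¹ * m.prod ^ n * of t := by
      rw [hprod, eq_inv_of_mul_eq_one_right hts, map_inv]
      simpa using conj_pow (a := (of t)⁻¹) (b := m.prod) (i := n)
    rcases ih _ (by omega) m rfl with hm | ⟨m', hm'⟩
    · left; rw [hpow, hm, mul_one, inv_mul_cancel]
    · right
      refine ⟨append (singleton t⁻¹ (inv_ne_one.2 w'.last_ne_one)) hik
        (append m' hai (singleton t w'.last_ne_one)), ?_⟩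
      rw [hpow, append_prod, append_prod, hm', prod_singleton, prod_singleton, map_inv, mul_assoc]
  · right
    obtain ⟨n, rfl⟩ := Nat.exists_eq_succ_of_ne_zero hn
    refine ⟨append (singleton s w.head_ne_one) hik
      ((append m hai (singleton (t * s) hts)).powAppend hik
        (append m hai (singleton t w'.last_ne_one)) n), ?_⟩
    have hsemi : SemiconjBy (of s) (m.prod * of (t * s)) (of s * m.prod * of t) := by
      simp only [SemiconjBy, map_mul, mul_assoc]
    rw [append_prod, prod_powAppend, append_prod, append_prod, prod_singleton, prod_singleton,
      prod_singleton, hprod, pow_succ, ← mul_assoc, (hsemi.pow_right n).eq]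
    simp only [mul_assoc]

end Group

end NeWord

section Group

variable {G : ι → Type*} [∀ i, Group (G i)]

theorem eq_one_of_mem_range_of_of_mem_range_of {i j : ι} (hij : i ≠ j)
    {x : CoprodI G} (hi : x ∈ (of : G i →* _).range) (hj : x ∈ (of : G j →* _).range) :
    x = 1 := by
  classical
  obtain ⟨y, rfl⟩ := hi
  obtain ⟨z, hz⟩ := hj
  have hy := of_leftInverse (M := G) i y
  rw [← hz, lift_of, Pi.mulSingle_eq_of_ne hij.symm, MonoidHom.one_apply] at hy
  rw [← hy, map_one]

theorem pow_ne_of_mul_of {i j : ι} (hij : i ≠ j) {u : G i} {v : G j} (hu : u ≠ 1)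
    (hv : v ≠ 1) (x : CoprodI G) {n : ℕ} (hn : 2 ≤ n) : x ^ n ≠ of u * of v := by
  classical
  let uv := NeWord.append (.singleton u hu) hij (.singleton v hv)
  have huv : uv.prod = of u * of v := by simp [uv]
  rw [← huv]
  intro hx
  obtain rfl | hx1 := eq_or_ne x 1
  · exact uv.prod_ne_one (by rw [← hx, one_pow])
  obtain ⟨k, l, w, rfl⟩ := NeWord.exists_prod_of_ne_one hx1
  obtain rfl | hkl := eq_or_ne k l
  · rcases w.pow_eq_one_or_exists_prod_eq_pow (n := n) (by omega) with h | ⟨w', hw'⟩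
    · exact uv.prod_ne_one (hx ▸ h)
    · obtain ⟨rfl, rfl⟩ := NeWord.idx_eq_of_prod_eq (hw'.trans hx)
      exact hij rfl
  · obtain ⟨w', hw', hlen⟩ := w.exists_prod_eq_pow_of_ne hkl (n := n) (by omega)
    have h : n * w.toList.length = 2 := by
      rw [← hlen, NeWord.toList_eq_of_prod_eq (hw'.trans hx)]
      rfl
    have := Nat.mul_le_mul hn (w.two_le_length_toList hkl)
    omega

end Group

end Monoid.CoprodI

namespace GraphProduct

variable {V : Type} {Γ : SimpleGraph V} {𝔭 : V → ℕ}

def lift {H : Type*} [Group H] (f : V → H) (hpow : ∀ v, f v ^ 𝔭 v = 1)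
    (hcomm : ∀ a b, Γ.Adj a b → Commute (f a) (f b)) : GraphProduct Γ 𝔭 →* H :=
  PresentedGroup.toGroup (rels := graphProdRels Γ 𝔭) (f := f) <| by
    rintro r (⟨v, -, rfl⟩ | ⟨a, b, hab, rfl⟩)
    · rw [map_pow, FreeGroup.lift_apply_of, hpow]
    · simp only [map_mul, map_inv, FreeGroup.lift_apply_of, (hcomm a b hab).eq,
        mul_inv_cancel_right, mul_inv_cancel]

theorem lift_of {H : Type*} [Group H] (f : V → H) (hpow : ∀ v, f v ^ 𝔭 v = 1)
    (hcomm : ∀ a b, Γ.Adj a b → Commute (f a) (f b)) (v : V) :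
    lift f hpow hcomm (of v) = f v :=
  PresentedGroup.toGroup.of _

theorem map_mem_of_notMem_sp {H : Type*} [Group H] (φ : GraphProduct Γ 𝔭 →* H)
    {K : Subgroup H} {g : GraphProduct Γ 𝔭} {v : V} (hv : v ∉ g.sp)
    (hK : ∀ w, w ≠ v → φ (of w) ∈ K) : φ g ∈ K := by
  obtain ⟨A, hg, hvA⟩ : ∃ A : Set V, g ∈ Subgroup.closure (of '' A) ∧ v ∉ A := by
    simpa [sp] using hv
  refine (Subgroup.closure_le (K.comap φ)).2 ?_ hg
  rintro _ ⟨w, hw, rfl⟩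
  exact hK w fun h => hvA (h ▸ hw)

open Classical in
noncomputable def toCoprodIOfNotAdj (a b : V) (hab : ¬ Γ.Adj a b) :
    GraphProduct Γ 𝔭 →* Monoid.CoprodI fun v => Multiplicative (ZMod (𝔭 v)) :=
  lift (fun v => if v = a ∨ v = b then Monoid.CoprodI.of (Multiplicative.ofAdd 1) else 1)
    (fun v => by
      split_ifs
      · rw [← map_pow, ← ofAdd_nsmul, nsmul_one, ZMod.natCast_self, ofAdd_zero, map_one]
      · exact one_pow _)
    (fun x y hxy => by
      split_ifs with hx hy hy
      · exfalso
        rcases hx with rfl | rfl <;> rcases hy with rfl | rfl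
        exacts [hxy.ne rfl, hab hxy, hab hxy.symm, hxy.ne rfl]
      all_goals simp)

variable {a b : V} {hab : ¬ Γ.Adj a b}

theorem toCoprodIOfNotAdj_of_of_mem {v : V} (hv : v = a ∨ v = b) :
    toCoprodIOfNotAdj a b hab (of v : GraphProduct Γ 𝔭) =
      Monoid.CoprodI.of (M := fun v => Multiplicative (ZMod (𝔭 v))) (i := v)
        (Multiplicative.ofAdd 1) := by
  rw [toCoprodIOfNotAdj, lift_of, if_pos hv]

theorem toCoprodIOfNotAdj_of_of_notMem {v : V} (hv : ¬(v = a ∨ v = b)) :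
    toCoprodIOfNotAdj a b hab (of v : GraphProduct Γ 𝔭) = 1 := by
  rw [toCoprodIOfNotAdj, lift_of, if_neg hv]

theorem toCoprodIOfNotAdj_eq_one {g : GraphProduct Γ 𝔭} (hne : a ≠ b) (ha : a ∉ g.sp)
    (hb : b ∉ g.sp) : toCoprodIOfNotAdj a b hab g = 1 := by
  refine Monoid.CoprodI.eq_one_of_mem_range_of_of_mem_range_of hne
    (map_mem_of_notMem_sp _ hb fun w hw => ?_) (map_mem_of_notMem_sp _ ha fun w hw => ?_)
  · by_cases hwa : w = a
    · subst hwa; exact ⟨_, (toCoprodIOfNotAdj_of_of_mem (Or.inl rfl)).symm⟩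
    · rw [toCoprodIOfNotAdj_of_of_notMem (by tauto)]; exact one_mem _
  · by_cases hwb : w = b
    · subst hwb; exact ⟨_, (toCoprodIOfNotAdj_of_of_mem (Or.inr rfl)).symm⟩
    · rw [toCoprodIOfNotAdj_of_of_notMem (by tauto)]; exact one_mem _

end GraphProduct

theorem stmt_4_general {V : Type} (Γ : SimpleGraph V) (𝔭 : V → ℕ)
    (h𝔭 : ∀ v, 𝔭 v = 0 ∨ IsPrimePow (𝔭 v))
    (g : GraphProduct Γ 𝔭) (a₁ a₂ b₁ b₂ : V)
    (hdist : [a₁, a₂, b₁, b₂].Nodup)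
    (hsp : a₁ ∉ GraphProduct.sp g ∧ a₂ ∉ GraphProduct.sp g ∧
           b₁ ∉ GraphProduct.sp g ∧ b₂ ∉ GraphProduct.sp g)
    (hadj₁ : ¬ Γ.Adj a₁ b₁)
    (n : ℕ) (hn : 2 ≤ n) :
    ¬ ∃ x : GraphProduct Γ 𝔭,
        x ^ n = g * (GraphProduct.of a₁)⁻¹ * GraphProduct.of a₂ *
          (GraphProduct.of b₁)⁻¹ * GraphProduct.of b₂ := by
  rintro ⟨x, hx⟩
  simp only [List.nodup_cons, List.mem_cons, List.not_mem_nil, or_false, not_or,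
    List.nodup_nil, and_true] at hdist
  obtain ⟨⟨ha₁a₂, ha₁b₁, ha₁b₂⟩, ⟨ha₂b₁, -⟩, hb₁b₂, -⟩ := hdist
  have hgen : ∀ v, Multiplicative.ofAdd (1 : ZMod (𝔭 v)) ≠ 1 := fun v => by
    rw [Ne, ofAdd_eq_one, ZMod.one_eq_zero_iff]
    rcases h𝔭 v with h | h
    · omega
    · exact h.ne_one
  set φ := GraphProduct.toCoprodIOfNotAdj (𝔭 := 𝔭) a₁ b₁ hadj₁
  refine Monoid.CoprodI.pow_ne_of_mul_of ha₁b₁ (inv_ne_one.2 (hgen a₁)) (inv_ne_one.2 (hgen b₁))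
    (φ x) hn ?_
  rw [← map_pow, hx, map_mul, map_mul, map_mul, map_mul, map_inv, map_inv,
    GraphProduct.toCoprodIOfNotAdj_eq_one ha₁b₁ hsp.1 hsp.2.2.1,
    GraphProduct.toCoprodIOfNotAdj_of_of_mem (Or.inl rfl),
    GraphProduct.toCoprodIOfNotAdj_of_of_mem (Or.inr rfl),
    GraphProduct.toCoprodIOfNotAdj_of_of_notMem (by tauto),
    GraphProduct.toCoprodIOfNotAdj_of_of_notMem (by tauto)]
  simp

theorem stmt_4 {V : Type} (Γ : SimpleGraph V) (𝔭 : V → ℕ)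
    (h𝔭 : ∀ v, 𝔭 v = 0 ∨ IsPrimePow (𝔭 v))
    (g : GraphProduct Γ 𝔭) (a₁ a₂ b₁ b₂ : V)
    (hdist : [a₁, a₂, b₁, b₂].Nodup)
    (hsp : a₁ ∉ GraphProduct.sp g ∧ a₂ ∉ GraphProduct.sp g ∧
           b₁ ∉ GraphProduct.sp g ∧ b₂ ∉ GraphProduct.sp g)
    (hadj₁ : ¬ Γ.Adj a₁ b₁) (hadj₂ : ¬ Γ.Adj a₂ b₂)
    (n : ℕ) (hn : 2 ≤ n) :
    ¬ ∃ x : GraphProduct Γ 𝔭,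
        x ^ n = g * (GraphProduct.of a₁)⁻¹ * GraphProduct.of a₂ *
          (GraphProduct.of b₁)⁻¹ * GraphProduct.of b₂ :=
  stmt_4_general Γ 𝔭 h𝔭 g a₁ a₂ b₁ b₂ hdist hsp hadj₁ n hn
end

section
/- Let G = G₁ ⊕ G₂ be an abelian group, where G₂ = ⊕_{α < λ} ℤ x_α is free abelian on uncountably many generators (λ > ℵ₀). Then G does not admit a Polish group topology. -/
/-!
A Polish group is separable, and the coordinates of countably many elements of `ι →₀ ℤ` lie in a
countable set, so some coordinate `β` vanishes on a countable dense subset of `G`. The projection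
`f : G →+ ℤ` onto that coordinate then has dense kernel but is nonzero. This contradicts Dudley's
theorem that a homomorphism from a completely metrizable abelian group to `ℤ` has open kernel, an
open subgroup being closed.

Dudley's argument: if `ker f` is not a neighbourhood of `0`, choose `y n` with `f (y n) ≠ 0`, so small
that the series `t m = ∑_{i ≥ m} (k m ⋯ k (i-1)) • y i` converge, and then multipliers `k n` so
large that the integer recursion `f (t m) = f (y m) + k m * f (t (m+1))` has no solution.
-/

open Finset Filter Topology TopologicalSpace

theorem exists_seq_forall_of_exists_next {α : Type*} [Nonempty α]
    (p : ℕ → (ℕ → α) → α → Prop)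
    (hp : ∀ n x x', (∀ i < n, x i = x' i) → ∀ a, p n x a → p n x' a)
    (h : ∀ n x, ∃ a, p n x a) : ∃ x : ℕ → α, ∀ n, p n x (x n) := by
  classical
  choose next hnext using h
  let hist : ℕ → ℕ → α := fun n =>
    Nat.rec (fun _ => Classical.arbitrary α) (fun m x => Function.update x m (next m x)) n
  have hhist : ∀ n, ∀ i < n, hist n i = next i (hist i) := by
    intro n
    induction n with
    | zero => intro i hi; omega
    | succ n ih =>
      intro i hi
      change Function.update (hist n) n (next n (hist n)) i = _
      rcases Nat.lt_succ_iff_lt_or_eq.1 hi with hi | rfl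
      · rw [Function.update_of_ne hi.ne, ih i hi]
      · exact Function.update_self ..
  exact ⟨fun i => next i (hist i), fun n => hp n _ _ (hhist n) _ (hnext n _)⟩

section TailSum

variable {G : Type*} [AddCommGroup G]

/-- Partial sums of the formal solution of `t m = y m + k m • t (m + 1)`. -/
def tailSum (y : ℕ → G) (k : ℕ → ℤ) (m n : ℕ) : G :=
  ∑ i ∈ Ico m n, (∏ j ∈ Ico m i, k j) • y i

theorem tailSum_congr {y y' : ℕ → G} {k k' : ℕ → ℤ} {n : ℕ} (hy : ∀ i < n, y i = y' i)
    (hk : ∀ i < n, k i = k' i) (m : ℕ) : tailSum y k m n = tailSum y' k' m n := by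
  refine sum_congr rfl fun i hi => ?_
  have hin := (mem_Ico.1 hi).2
  rw [hy i hin, prod_congr rfl fun j hj => hk j ((mem_Ico.1 hj).2.trans hin)]

theorem tailSum_of_le (y : ℕ → G) (k : ℕ → ℤ) {m n : ℕ} (h : n ≤ m) : tailSum y k m n = 0 := by
  rw [tailSum, Ico_eq_empty_of_le h, sum_empty]

theorem tailSum_succ (y : ℕ → G) (k : ℕ → ℤ) {m n : ℕ} (h : m ≤ n) :
    tailSum y k m (n + 1) = tailSum y k m n + (∏ j ∈ Ico m n, k j) • y n :=
  sum_Ico_succ_top h _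

theorem tailSum_eq_add_zsmul (y : ℕ → G) (k : ℕ → ℤ) {m n : ℕ} (h : m < n) :
    tailSum y k m n = y m + k m • tailSum y k (m + 1) n := by
  rw [tailSum, sum_eq_sum_Ico_succ_bot h, Ico_self, prod_empty, one_smul, tailSum, smul_sum]
  congr 1
  refine sum_congr rfl fun i hi => ?_
  rw [prod_eq_prod_Ico_succ_bot (Nat.lt_of_succ_le (mem_Ico.1 hi).1), mul_smul]

theorem map_tailSum {H : Type*} [AddCommGroup H] (f : G →+ H) (y : ℕ → G) (k : ℕ → ℤ)
    (m n : ℕ) : f (tailSum y k m n) = tailSum (fun i => f (y i)) k m n := by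
  simp only [tailSum, map_sum, map_zsmul]

end TailSum

theorem not_exists_forall_eq_add_mul_succ (b k : ℕ → ℤ) (hb : ∀ n, b n ≠ 0)
    (hk : ∀ n, 2 * |tailSum b k 0 (n + 1)| + 2 ≤ k n) :
    ¬ ∃ a : ℕ → ℤ, ∀ n, a n = b n + k n * a (n + 1) := by
  rintro ⟨a, ha⟩
  set P : ℕ → ℤ := fun n => ∏ j ∈ Ico 0 n, k j with hP
  set B : ℕ → ℤ := tailSum b k 0 with hB
  have hk2 (n : ℕ) : 2 ≤ k n := by linarith [hk n, abs_nonneg (B (n + 1))]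
  have hP_succ (n : ℕ) : P (n + 1) = P n * k n := prod_Ico_succ_top (Nat.zero_le n) _
  have hP_pow (n : ℕ) : 2 ^ n ≤ P n :=
    calc (2 : ℤ) ^ n = ∏ _j ∈ Ico 0 n, 2 := by simp
      _ ≤ P n := prod_le_prod (fun _ _ => zero_le_two) fun j _ => hk2 j
  have hP_one (n : ℕ) : 1 ≤ P n := le_trans (one_le_pow₀ one_le_two) (hP_pow n)
  have hB_lt : ∀ n, 2 * |B n| < P n
    | 0 => by simp [hB, hP, tailSum_of_le]
    | n + 1 => by
      rw [hP_succ]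
      linarith [hk n, le_mul_of_one_le_left (by linarith [hk2 n] : 0 ≤ k n) (hP_one n)]
  have ha0 (n : ℕ) : a 0 = B n + P n * a n := by
    induction n with
    | zero => simp [hB, hP, tailSum_of_le]
    | succ n ih =>
      rw [ih, ha n, hB, tailSum_succ _ _ (Nat.zero_le n), hP_succ, smul_eq_mul]
      ring
  obtain ⟨N, hN⟩ := pow_unbounded_of_one_lt (2 * |a 0|) one_lt_two
  -- `a 0 ≡ B n [ZMOD P n]` with both sides small compared to `P n`
  have hB_eq (n : ℕ) (hn : N ≤ n) : B n = a 0 := by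
    have hlt : 2 * |a 0| < P n :=
      hN.trans_le ((pow_le_pow_right₀ one_le_two hn).trans (hP_pow n))
    have hdvd : P n ∣ B n - a 0 := ⟨-a n, by rw [ha0 n]; ring⟩
    exact sub_eq_zero.1 <| Int.eq_zero_of_abs_lt_dvd hdvd <|
      (abs_sub _ _).trans_lt (by linarith [hB_lt n])
  have hstep : B (N + 1) = B N + P N * b N := tailSum_succ _ _ (Nat.zero_le N)
  rw [hB_eq N le_rfl, hB_eq (N + 1) N.le_succ, left_eq_add] at hstep
  exact mul_ne_zero (by linarith [hP_one N]) (hb N) hstep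

section CompleteGroup

variable {G : Type*} [AddCommGroup G] [MetricSpace G] [IsTopologicalAddGroup G]

theorem exists_forall_eq_add_zsmul_of_dist_lt [CompleteSpace G] {y : ℕ → G} {k : ℕ → ℤ}
    (hy : ∀ n, ∀ m ≤ n, dist (tailSum y k m (n + 1)) (tailSum y k m n) < (1 / 2) ^ n) :
    ∃ t : ℕ → G, ∀ m, t m = y m + k m • t (m + 1) := by
  have hcauchy (m : ℕ) : CauchySeq (tailSum y k m) := by
    refine cauchySeq_of_le_geometric (1 / 2) 1 (by norm_num) fun n => ?_
    rcases le_or_gt m n with hmn | hnm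
    · rw [dist_comm, one_mul]
      exact (hy n m hmn).le
    · rw [tailSum_of_le y k hnm.le, tailSum_of_le y k hnm, dist_self]
      positivity
  choose t ht using fun m => cauchySeq_tendsto_of_complete (hcauchy m)
  refine ⟨t, fun m => tendsto_nhds_unique (ht m) ?_⟩
  refine ((((continuous_zsmul (k m)).tendsto _).comp (ht (m + 1))).const_add (y m)).congr' ?_
  filter_upwards [eventually_gt_atTop m] with n hn
  exact (tailSum_eq_add_zsmul y k hn).symm

theorem exists_seq_dist_tailSum_lt (f : G →+ ℤ) (hf : ∃ᶠ z in 𝓝 (0 : G), f z ≠ 0) :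
    ∃ (y : ℕ → G) (k : ℕ → ℤ), ∀ n, f (y n) ≠ 0 ∧
      (∀ m ≤ n, dist (tailSum y k m (n + 1)) (tailSum y k m n) < (1 / 2) ^ n) ∧
      k n = 2 * |f (tailSum y k 0 (n + 1))| + 2 := by
  let S (x : ℕ → G × ℤ) : ℕ → ℕ → G := tailSum (fun i => (x i).1) (fun i => (x i).2)
  let P (x : ℕ → G × ℤ) (m n : ℕ) : ℤ := ∏ j ∈ Ico m n, (x j).2
  let p (n : ℕ) (x : ℕ → G × ℤ) (a : G × ℤ) : Prop := f a.1 ≠ 0 ∧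
    (∀ m ≤ n, dist (S x m n + P x m n • a.1) (S x m n) < (1 / 2) ^ n) ∧
    a.2 = 2 * |f (S x 0 n + P x 0 n • a.1)| + 2
  have hp (n : ℕ) (x x' : ℕ → G × ℤ) (h : ∀ i < n, x i = x' i) (a : G × ℤ) :
      p n x a → p n x' a := by
    have hS (m : ℕ) : S x m n = S x' m n :=
      tailSum_congr (fun i hi => by rw [h i hi]) (fun i hi => by rw [h i hi]) m
    have hP (m : ℕ) : P x m n = P x' m n :=
      prod_congr rfl fun j hj => by rw [h j (mem_Ico.1 hj).2]
    rintro ⟨hfa, hdist, hk⟩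
    refine ⟨hfa, fun m hm => ?_, ?_⟩
    · rw [← hS, ← hP]
      exact hdist m hm
    · rw [← hS, ← hP]
      exact hk
  have hnext (n : ℕ) (x : ℕ → G × ℤ) : ∃ a, p n x a := by
    have hsmall : ∀ᶠ z in 𝓝 (0 : G), ∀ m ∈ range (n + 1),
        dist (S x m n + P x m n • z) (S x m n) < (1 / 2) ^ n := by
      refine (eventually_all_finset _).2 fun m _ => ?_
      have hcont : Tendsto (fun z : G => S x m n + P x m n • z) (𝓝 0) (𝓝 (S x m n)) := by
        simpa using ((continuous_zsmul (P x m n)).tendsto 0).const_add (S x m n)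
      exact hcont.eventually (Metric.ball_mem_nhds _ (by positivity))
    obtain ⟨z, hz, hzsmall⟩ := (hf.and_eventually hsmall).exists
    exact ⟨(z, 2 * |f (S x 0 n + P x 0 n • z)| + 2), hz,
      fun m hm => hzsmall m (mem_range_succ_iff.2 hm), rfl⟩
  obtain ⟨x, hx⟩ := exists_seq_forall_of_exists_next p hp hnext
  refine ⟨fun i => (x i).1, fun i => (x i).2, fun n => ?_⟩
  obtain ⟨hfx, hdist, hk⟩ := hx n
  refine ⟨hfx, fun m hm => ?_, ?_⟩
  · rw [tailSum_succ _ _ hm]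
    exact hdist m hm
  · rw [tailSum_succ _ _ (Nat.zero_le n)]
    exact hk

end CompleteGroup

theorem AddMonoidHom.isOpen_ker_of_isCompletelyMetrizableSpace {G : Type*} [AddCommGroup G]
    [TopologicalSpace G] [IsTopologicalAddGroup G] [IsCompletelyMetrizableSpace G]
    (f : G →+ ℤ) : IsOpen (f.ker : Set G) := by
  by_contra hker
  have hf : ∃ᶠ z in 𝓝 (0 : G), f z ≠ 0 :=
    not_eventually.1 fun h => hker (f.ker.isOpen_of_mem_nhds h)
  let := upgradeIsCompletelyMetrizable G
  obtain ⟨y, k, hy⟩ := exists_seq_dist_tailSum_lt f hf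
  obtain ⟨t, ht⟩ := exists_forall_eq_add_zsmul_of_dist_lt fun n => (hy n).2.1
  refine not_exists_forall_eq_add_mul_succ (fun n => f (y n)) k (fun n => (hy n).1)
    (fun n => ?_) ⟨fun n => f (t n), fun n => ?_⟩
  · rw [(hy n).2.2, map_tailSum]
  · show f (t n) = _
    rw [ht n, map_add, map_zsmul, smul_eq_mul]

theorem AddSubgroup.eq_top_of_isOpen_of_dense {G : Type*} [AddGroup G] [TopologicalSpace G]
    [IsTopologicalAddGroup G] (H : AddSubgroup G) (hopen : IsOpen (H : Set G))
    (hdense : Dense (H : Set G)) : H = ⊤ :=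
  SetLike.coe_set_eq.1 <| by rw [← (H.isClosed_of_isOpen hopen).closure_eq, hdense.closure_eq,
    coe_top]

theorem Finsupp.exists_forall_apply_eq_zero_of_countable {ι M : Type*} [Zero M] [Uncountable ι]
    {s : Set (ι →₀ M)} (hs : s.Countable) : ∃ i, ∀ x ∈ s, x i = 0 := by
  have hsupp : (⋃ x ∈ s, (x.support : Set ι)).Countable :=
    hs.biUnion fun x _ => x.support.countable_toSet
  obtain ⟨i, hi⟩ : ∃ i, i ∉ ⋃ x ∈ s, (x.support : Set ι) := by
    by_contra! h
    exact Set.not_countable_univ (hsupp.mono fun i _ => h i)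
  exact ⟨i, fun x hx => Finsupp.notMem_support_iff.1 fun hxi => hi (Set.mem_biUnion hx hxi)⟩

theorem stmt_6 {G G₁ : Type} [AddCommGroup G] [AddCommGroup G₁]
    {ι : Type} [Uncountable ι] (e : G ≃+ G₁ × (ι →₀ ℤ)) :
    ¬ ∃ τ : TopologicalSpace G, @IsTopologicalAddGroup G τ _ ∧ @PolishSpace G τ := by
  rintro ⟨τ, hτ, hP⟩
  obtain ⟨D, hDc, hDd⟩ := exists_countable_dense G
  obtain ⟨β, hβ⟩ := Finsupp.exists_forall_apply_eq_zero_of_countable (hDc.image fun d => (e d).2)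
  let f : G →+ ℤ :=
    (Finsupp.applyAddHom β).comp ((AddMonoidHom.snd G₁ (ι →₀ ℤ)).comp e.toAddMonoidHom)
  have hker : f.ker = ⊤ := f.ker.eq_top_of_isOpen_of_dense
    f.isOpen_ker_of_isCompletelyMetrizableSpace
    (hDd.mono fun d hd => hβ _ (Set.mem_image_of_mem _ hd))
  have hone : e.symm (0, Finsupp.single β 1) ∈ f.ker := hker ▸ AddSubgroup.mem_top _
  simp [f] at hone
end

section
/- Let G = G' ⊕ ⊕_{n<ω} G_n, where each G_n = ⊕_{α<λ_n} C_{k(n)} is a direct sum of λ_n > ℵ₀ copies of the cyclic group of order k(n), with k(n) = p_n^{t(n)} for primes p_n and t(n) ≥ 1, and the k(n) pairwise distinct. Then G does not admit a Polish group topology. -/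
/-!
Suppose `G` carried a Polish group topology and fix a complete compatible metric. Every
neighbourhood of `0` contains an element `f` of the `n`-th summand with `p n ^ (t n - 1) • f ≠ 0`:
otherwise translates of a small neighbourhood would separate the uncountably many values of
`p n ^ (t n - 1) • ·`, contradicting separability. Choosing such elements `b n` one at a time,
each small enough, makes the series `u = ∑ p n ^ (t n - 1) • b n` converge together with the
countably many series `∑ i, c j i • b i`, where `k j * c j i ≡ p i ^ (t i - 1) [MOD k i]` for all
`i` outside the finite set of `i` with `p i = p j` and `t i ≤ t j` (here `k n = p n ^ t n`).
Hence `u` lies in `x + k j • G` for some `x` whose `j`-th coordinate is `p j ^ (t j - 1) • b j ≠ 0`,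
so every coordinate of `u` is nonzero, contradicting finite support.
-/

open Filter Topology Finset Pointwise

theorem natCast_pow_pred_ne_zero {q t : ℕ} (hq : q.Prime) (ht : 1 ≤ t) :
    ((q ^ (t - 1) : ℕ) : ZMod (q ^ t)) ≠ 0 := by
  rw [Ne, ZMod.natCast_eq_zero_iff]
  exact Nat.pow_dvd_pow_iff_le_right hq.one_lt |>.not.2 (by omega)

theorem exists_natCast_pow_mul_eq_pow_pred {p q s t : ℕ} (hp : p.Prime) (hq : q.Prime)
    (h : p ≠ q ∨ s < t) :
    ∃ c : ℕ, ((p ^ s * c : ℕ) : ZMod (q ^ t)) = ((q ^ (t - 1) : ℕ) : ZMod (q ^ t)) := by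
  by_cases hpq : p = q
  · subst hpq
    refine ⟨p ^ (t - 1 - s), ?_⟩
    rw [← pow_add]
    congr 3
    omega
  · have hcop : (p ^ s).Coprime (q ^ t) := Nat.coprime_pow_primes _ _ hp hq hpq
    have : NeZero (q ^ t) := ⟨pow_ne_zero _ hq.ne_zero⟩
    let u := ZMod.unitOfCoprime _ hcop
    refine ⟨((u⁻¹ : (ZMod (q ^ t))ˣ) * ((q ^ (t - 1) : ℕ) : ZMod (q ^ t))).val, ?_⟩
    rw [Nat.cast_mul, ZMod.natCast_val, ZMod.cast_id, ← ZMod.coe_unitOfCoprime _ hcop,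
      ← mul_assoc, Units.mul_inv, one_mul]

theorem exists_forall_natCast_pow_mul_eq_pow_pred {p t : ℕ → ℕ} (hp : ∀ n, (p n).Prime) :
    ∃ c : ℕ → ℕ → ℕ, ∀ j i, p j ≠ p i ∨ t j < t i →
      ((p j ^ t j * c j i : ℕ) : ZMod (p i ^ t i)) =
        ((p i ^ (t i - 1) : ℕ) : ZMod (p i ^ t i)) := by
  classical
  exact ⟨fun j i => if h : p j ≠ p i ∨ t j < t i then
      (exists_natCast_pow_mul_eq_pow_pred (hp j) (hp i) h).choose else 0,
    fun j i h => by simpa only [dif_pos h] using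
      (exists_natCast_pow_mul_eq_pow_pred (hp j) (hp i) h).choose_spec⟩

theorem eventually_ne_or_lt_of_injective {p t : ℕ → ℕ}
    (hinj : Function.Injective fun n => p n ^ t n) (j : ℕ) :
    ∀ᶠ i in atTop, p j ≠ p i ∨ t j < t i := by
  rw [← Nat.cofinite_eq_atTop, eventually_cofinite]
  refine (((Set.finite_Iic (t j)).image (p j ^ ·)).preimage hinj.injOn).subset ?_
  intro i hi
  simp only [Set.mem_ofPred_eq, not_or, not_not, not_lt] at hi
  exact ⟨t i, hi.2, by simp [hi.1]⟩

theorem not_countable_range_nsmul {ι : Type*} [Uncountable ι] {q t : ℕ} (hq : q.Prime)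
    (ht : 1 ≤ t) :
    ¬ (Set.range (DistribSMul.toAddMonoidHom (ι →₀ ZMod (q ^ t)) (q ^ (t - 1)))).Countable := by
  intro hcount
  have hmem (a : ι) : Finsupp.single a ((q ^ (t - 1) : ℕ) : ZMod (q ^ t)) ∈
      Set.range (DistribSMul.toAddMonoidHom (ι →₀ ZMod (q ^ t)) (q ^ (t - 1))) :=
    ⟨Finsupp.single a 1, by simp [Finsupp.smul_single]⟩
  have hinj : Function.Injective fun a => (⟨_, hmem a⟩ : Set.range _) := fun a b hab =>
    Finsupp.single_left_injective (natCast_pow_pred_ne_zero hq ht) (congrArg Subtype.val hab)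
  have := hcount.to_subtype
  exact not_countable hinj.countable

theorem zero_mem_closure_image_setOf_ne_zero {G H K : Type*} [TopologicalSpace G] [AddGroup G]
    [IsTopologicalAddGroup G] [TopologicalSpace.SeparableSpace G] [AddGroup H] [AddGroup K]
    (φ : H →+ G) (ψ : H →+ K) (hψ : ¬ (Set.range ψ).Countable) :
    (0 : G) ∈ closure (φ '' {x | ψ x ≠ 0}) := by
  rw [mem_closure_iff_nhds]
  intro U hU
  by_contra hU'
  obtain ⟨V, hV, hVU⟩ := exists_nhds_half_neg hU
  have hker : ∀ x, φ x ∈ U → ψ x = 0 := fun x hx => by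
    by_contra hx'
    exact hU' ⟨φ x, hx, x, hx', rfl⟩
  refine hψ (Set.PairwiseDisjoint.countable_of_isOpen
    (s := fun y => φ '' (ψ ⁻¹' {y}) + interior V) ?_ (fun _ _ => isOpen_interior.add_left) ?_)
  · rintro _ ⟨x, rfl⟩ _ ⟨x', rfl⟩ hne
    refine Set.disjoint_left.2 ?_
    rintro _ ⟨_, ⟨y, hy, rfl⟩, v, hv, rfl⟩ ⟨_, ⟨y', hy', rfl⟩, v', hv', heq⟩
    simp only [Set.mem_preimage, Set.mem_singleton_iff] at hy hy' heq
    have hdiff : φ (-y' + y) = v' - v := by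
      rw [map_add, map_neg, neg_add_eq_iff_eq_add, sub_eq_add_neg, ← add_assoc, heq,
        add_neg_cancel_right]
    have := hker _ (hdiff ▸ hVU v' (interior_subset hv') v (interior_subset hv))
    rw [map_add, map_neg, neg_add_eq_zero] at this
    exact hne (hy ▸ hy' ▸ this.symm)
  · rintro _ ⟨x, rfl⟩
    exact ⟨φ x + 0, Set.add_mem_add ⟨x, rfl, rfl⟩ (mem_interior_iff_mem_nhds.2 hV)⟩

theorem exists_seq_forall_tendsto_partialSum {G D : Type*} [PseudoMetricSpace G] [AddMonoid G]
    [ContinuousAdd G] [CompleteSpace G] [AddCommMonoid D] (σ : D →+ G) (S : ℕ → Set D)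
    (hS : ∀ n, (0 : G) ∈ closure (σ '' S n)) (a : ℕ → ℕ → ℕ) :
    ∃ b : ℕ → D, (∀ n, b n ∈ S n) ∧
      ∀ m, ∃ L, Tendsto (fun n => σ (∑ i ∈ range n, a m i • b i)) atTop (𝓝 L) := by
  have hstep (n : ℕ) (s : ℕ → D) : ∃ x ∈ S n,
      ∀ m ≤ n, dist (σ (s m)) (σ (s m + a m n • x)) < (1 / 2) ^ n := by
    have hsmall : ∀ᶠ y in 𝓝 (0 : G), ∀ m ∈ range (n + 1),
        dist (σ (s m)) (σ (s m) + a m n • y) < (1 / 2) ^ n := by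
      refine (eventually_all_finset _).2 fun m _ => ?_
      have hcont : Continuous fun y : G => dist (σ (s m)) (σ (s m) + a m n • y) := by fun_prop
      exact hcont.continuousAt.eventually_lt continuousAt_const (by simp)
    obtain ⟨_, hy, x, hx, rfl⟩ := mem_closure_iff_nhds.1 (hS n) _ hsmall
    exact ⟨x, hx, fun m hm => by simpa using hy m (mem_range.2 (Nat.lt_succ_of_le hm))⟩
  choose F hFS hF using hstep
  let s : ℕ → ℕ → D := fun n =>
    Nat.rec (motive := fun _ => ℕ → D) 0 (fun n s => s + fun m => a m n • F n s) n
  have hs (m n : ℕ) : ∑ i ∈ range n, a m i • F i (s i) = s n m := by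
    induction n with
    | zero => rfl
    | succ n ih => rw [sum_range_succ, ih]; rfl
  refine ⟨fun n => F n (s n), fun n => hFS n _, fun m => ?_⟩
  simp_rw [hs m]
  have hcauchy : CauchySeq fun n => σ (s (n + m) m) := by
    refine cauchySeq_of_dist_le_of_summable _ (fun n => ?_) summable_geometric_two
    calc dist (σ (s (n + m) m)) (σ (s (n + 1 + m) m))
        ≤ (1 / 2) ^ (n + m) := by
          rw [add_right_comm]
          exact (hF (n + m) (s (n + m)) m (by omega)).le
      _ ≤ (1 / 2) ^ n := pow_le_pow_of_le_one (by norm_num) (by norm_num) (by omega)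
  obtain ⟨L, hL⟩ := cauchySeq_tendsto_of_complete hcauchy
  exact ⟨L, (tendsto_add_atTop_iff_nat m).1 hL⟩

theorem tendsto_partialSum_of_eq_nsmul {G D : Type*} [TopologicalSpace G] [AddMonoid G]
    [ContinuousAdd G] [AddCommGroup D] (σ : D →+ G) {x y : ℕ → D} {k N : ℕ}
    (h : ∀ i ≥ N, x i = k • y i) {L : G}
    (hL : Tendsto (fun n => σ (∑ i ∈ range n, y i)) atTop (𝓝 L)) :
    Tendsto (fun n => σ (∑ i ∈ range n, x i)) atTop
      (𝓝 (σ (∑ i ∈ range N, (x i - k • y i)) + k • L)) := by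
  refine (tendsto_const_nhds.add (hL.nsmul k)).congr' (eventually_atTop.2 ⟨N, fun n hn => ?_⟩)
  dsimp only
  rw [← map_nsmul, ← map_add, ← sum_range_add_sum_Ico _ hn, ← sum_range_add_sum_Ico _ hn,
    sum_congr rfl fun i hi => h i (mem_Ico.1 hi).1, sum_sub_distrib, smul_add, smul_sum,
    smul_sum]
  congr 1
  abel

section

variable {p t : ℕ → ℕ} {ι : ℕ → Type*}

local notation "𝔻" => Π₀ n, (ι n →₀ ZMod (p n ^ t n))

theorem exists_tendsto_partialSum_coord_ne_zero {G : Type*} [TopologicalSpace G] [AddMonoid G]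
    [ContinuousAdd G] (σ : 𝔻 →+ G) (π : ∀ j, G →+ (ι j →₀ ZMod (p j ^ t j)))
    (hπσ : ∀ j x, π j (σ x) = x j) (hinj : Function.Injective fun n => p n ^ t n)
    (c : ℕ → ℕ → ℕ) (hc : ∀ j i, p j ≠ p i ∨ t j < t i →
      ((p j ^ t j * c j i : ℕ) : ZMod (p i ^ t i)) = ((p i ^ (t i - 1) : ℕ) : ZMod (p i ^ t i)))
    (f : ∀ n, ι n →₀ ZMod (p n ^ t n)) (j : ℕ) (hf : p j ^ (t j - 1) • f j ≠ 0)
    (hL : ∃ L, Tendsto (fun n => σ (∑ i ∈ range n, c j i • (DFinsupp.single i (f i) : 𝔻)))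
      atTop (𝓝 L)) :
    ∃ u, Tendsto (fun n => σ (∑ i ∈ range n, p i ^ (t i - 1) • (DFinsupp.single i (f i) : 𝔻)))
      atTop (𝓝 u) ∧ π j u ≠ 0 := by
  obtain ⟨L, hL⟩ := hL
  obtain ⟨N, hN⟩ := ((eventually_ne_or_lt_of_injective hinj j).and
    (eventually_gt_atTop j)).exists_forall_of_atTop
  let x (i : ℕ) : 𝔻 := p i ^ (t i - 1) • DFinsupp.single i (f i)
  let y (i : ℕ) : 𝔻 := c j i • DFinsupp.single i (f i)
  have hx : ∀ i ≥ N, x i = p j ^ t j • y i := fun i hi => by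
    dsimp only [x, y]
    rw [smul_smul, ← DFinsupp.single_smul, ← DFinsupp.single_smul,
      ← Nat.cast_smul_eq_nsmul (ZMod (p i ^ t i)), ← Nat.cast_smul_eq_nsmul (ZMod (p i ^ t i)),
      hc j i (hN i hi).1]
  refine ⟨_, tendsto_partialSum_of_eq_nsmul σ (x := x) (y := y) hx hL, ?_⟩
  rw [map_add, map_nsmul, hπσ, ZModModule.char_nsmul_eq_zero, add_zero, DFinsupp.finsetSum_apply,
    sum_eq_single_of_mem j (mem_range.2 (hN N le_rfl).2)]
  · simpa [x, y, ZModModule.char_nsmul_eq_zero] using hf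
  · intro i _ hij
    simp [x, y, hij]

end

theorem stmt_7 {G G' : Type} [AddGroup G] [AddGroup G']
    (p t : ℕ → ℕ) (hp : ∀ n, (p n).Prime) (ht : ∀ n, 1 ≤ t n)
    (hdist : Function.Injective (fun n => p n ^ t n))
    (ι : ℕ → Type) (hι : ∀ n, Uncountable (ι n))
    (e : G ≃+ G' × (Π₀ n, (ι n →₀ ZMod (p n ^ t n)))) :
    ¬ ∃ τ : TopologicalSpace G, @IsTopologicalAddGroup G τ _ ∧ @PolishSpace G τ := by
  classical
  rintro ⟨τ, _, _⟩
  let := TopologicalSpace.upgradeIsCompletelyMetrizable G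
  let σ : (Π₀ n, (ι n →₀ ZMod (p n ^ t n))) →+ G :=
    (e.symm : _ →+ G).comp (AddMonoidHom.inr G' _)
  let π (j : ℕ) :=
    (DFinsupp.evalAddMonoidHom j).comp ((AddMonoidHom.snd G' _).comp e.toAddMonoidHom)
  have hπσ (j : ℕ) x : π j (σ x) = x j := by simp [σ, π, DFinsupp.evalAddMonoidHom]
  have hS (n : ℕ) :
      (0 : G) ∈ closure (σ '' (DFinsupp.single n '' {f | p n ^ (t n - 1) • f ≠ 0})) := by
    rw [Set.image_image]
    exact zero_mem_closure_image_setOf_ne_zero (σ.comp (DFinsupp.singleAddHom _ n)) _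
      (not_countable_range_nsmul (hp n) (ht n))
  obtain ⟨c, hc⟩ := exists_forall_natCast_pow_mul_eq_pow_pred hp
  obtain ⟨b, hb, hL⟩ := exists_seq_forall_tendsto_partialSum σ _ hS c
  choose f hf hbf using hb
  obtain rfl : b = fun n => DFinsupp.single n (f n) := funext fun n => (hbf n).symm
  have hlim (j : ℕ) := exists_tendsto_partialSum_coord_ne_zero σ π hπσ hdist c hc f j (hf j) (hL j)
  obtain ⟨u, hu, -⟩ := hlim 0
  obtain ⟨j, hj⟩ := Infinite.exists_notMem_finset (e u).2.support
  obtain ⟨v, hv, hvj⟩ := hlim j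
  exact hvj (tendsto_nhds_unique hv hu ▸ DFinsupp.notMem_support_iff.1 hj)
end

section
/- For every prime power p^n, the group ⊕_{α < 2^{ℵ₀}} ℤ_{p^n} is isomorphic to the countable product (ℤ_{p^n})^ω. -/
/-!
Reduction modulo `p` maps `(ℤ/p^n)^ℕ` onto `(ℤ/p)^ℕ`, an `𝔽_p`-vector space of dimension `𝔠`.
A coordinatewise lift of an `𝔽_p`-basis is a `ℤ/p^n`-basis: it spans by Nakayama's lemma, `p`
being nilpotent, and it is independent because in `ℤ/p^n` an element killed by `p^k` with `k < n`
is divisible by `p`, so a relation whose coefficients are all divisible by `p^k` can be divided by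
`p^k` and reduced modulo `p`. Hence `(ℤ/p^n)^ℕ` is free of rank `𝔠`.
-/

open Cardinal Function Submodule

theorem Submodule.eq_top_of_forall_eq_add_smul {R M : Type*} [Semiring R] [AddCommMonoid M]
    [Module R M] (N : Submodule R M) {ϖ : R} {n : ℕ} (hnil : ϖ ^ n = 0)
    (h : ∀ m : M, ∃ s ∈ N, ∃ m', m = s + ϖ • m') : N = ⊤ := by
  have hpow : ∀ k, ∀ m : M, ∃ s ∈ N, ∃ m', m = s + ϖ ^ k • m' := by
    intro k
    induction k with
    | zero => exact fun m => ⟨0, N.zero_mem, m, by simp⟩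
    | succ k ih =>
      intro m
      obtain ⟨s, hs, m', rfl⟩ := ih m
      obtain ⟨s', hs', m'', rfl⟩ := h m'
      refine ⟨s + ϖ ^ k • s', N.add_mem hs (N.smul_mem _ hs'), m'', ?_⟩
      rw [smul_add, add_assoc, smul_smul, pow_succ]
  refine eq_top_iff'.mpr fun m => ?_
  obtain ⟨s, hs, m', rfl⟩ := hpow n m
  simpa [hnil] using hs

section LiftBasis

variable {R S ι B : Type*} [CommRing R] [CommRing S] (φ : R →+* S) {ϖ : R} {n : ℕ}

theorem RingHom.compLeft_sum_smul (s : Finset B) (g : B → R) (x : B → ι → R) :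
    φ.compLeft ι (∑ β ∈ s, g β • x β) = ∑ β ∈ s, φ (g β) • φ.compLeft ι (x β) := by
  rw [map_sum]
  refine Finset.sum_congr rfl fun β _ => ?_
  funext i
  exact map_mul φ (g β) (x β i)

variable {φ}

theorem RingHom.exists_eq_smul_of_compLeft_eq_zero (hker : ∀ r, φ r = 0 ↔ ϖ ∣ r) {v : ι → R}
    (hv : φ.compLeft ι v = 0) : ∃ w, v = ϖ • w := by
  choose w hw using fun i => (hker (v i)).mp (congrFun hv i)
  exact ⟨w, funext hw⟩

theorem linearIndependent_of_linearIndependent_compLeft (hker : ∀ r, φ r = 0 ↔ ϖ ∣ r)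
    (hnil : ϖ ^ n = 0) (hann : ∀ k < n, ∀ r, ϖ ^ k * r = 0 → ϖ ∣ r) {x : B → ι → R}
    (hx : LinearIndependent S fun β => φ.compLeft ι (x β)) : LinearIndependent R x := by
  rw [linearIndependent_iff']
  intro s g hg
  have hdvd : ∀ k ≤ n, ∀ β ∈ s, ϖ ^ k ∣ g β := by
    intro k
    induction k with
    | zero => simp
    | succ k ih =>
      intro hk
      choose! g' hg' using ih (by omega)
      have hsum : ϖ ^ k • ∑ β ∈ s, g' β • x β = 0 := by
        rw [Finset.smul_sum, ← hg]
        refine Finset.sum_congr rfl fun β hβ => ?_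
        rw [smul_smul, ← hg' β hβ]
      have hred : ∑ β ∈ s, φ (g' β) • φ.compLeft ι (x β) = 0 := by
        rw [← RingHom.compLeft_sum_smul]
        funext i
        exact (hker _).mpr (hann k (by omega) _ (congrFun hsum i))
      intro β hβ
      obtain ⟨c, hc⟩ := (hker _).mp (linearIndependent_iff'.mp hx s _ hred β hβ)
      exact ⟨c, by rw [hg' β hβ, hc, pow_succ, mul_assoc]⟩
  intro β hβ
  obtain ⟨c, hc⟩ := hdvd n le_rfl β hβ
  rw [hc, hnil, zero_mul]

theorem span_eq_top_of_span_compLeft_eq_top (hφ : Surjective φ) (hker : ∀ r, φ r = 0 ↔ ϖ ∣ r)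
    (hnil : ϖ ^ n = 0) {x : B → ι → R}
    (hx : span S (Set.range fun β => φ.compLeft ι (x β)) = ⊤) : span R (Set.range x) = ⊤ := by
  refine (span R (Set.range x)).eq_top_of_forall_eq_add_smul hnil fun v => ?_
  obtain ⟨c, hc⟩ := Finsupp.mem_span_range_iff_exists_finsupp.mp (hx ▸ mem_top (x := φ.compLeft ι v))
  set t := ∑ β ∈ c.support, surjInv hφ (c β) • x β
  have ht : t ∈ span R (Set.range x) :=
    sum_mem fun β _ => smul_mem _ _ (subset_span (Set.mem_range_self β))
  have hred : φ.compLeft ι (v - t) = 0 := by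
    rw [map_sub, RingHom.compLeft_sum_smul, ← hc, Finsupp.sum]
    simp only [surjInv_eq hφ, sub_self]
  obtain ⟨w, hw⟩ := RingHom.exists_eq_smul_of_compLeft_eq_zero hker hred
  exact ⟨t, ht, w, by rw [← hw, add_sub_cancel]⟩

theorem nonempty_basis_of_basis_compLeft (hφ : Surjective φ) (hker : ∀ r, φ r = 0 ↔ ϖ ∣ r)
    (hnil : ϖ ^ n = 0) (hann : ∀ k < n, ∀ r, ϖ ^ k * r = 0 → ϖ ∣ r)
    (b : Module.Basis B S (ι → S)) : Nonempty (Module.Basis B R (ι → R)) := by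
  set x : B → ι → R := fun β i => surjInv hφ (b β i)
  have hxb : (fun β => φ.compLeft ι (x β)) = b := by
    funext β i
    exact surjInv_eq hφ _
  refine ⟨.mk (linearIndependent_of_linearIndependent_compLeft (x := x) hker hnil hann ?_)
    (span_eq_top_of_span_compLeft_eq_top (x := x) hφ hker hnil ?_).ge⟩
  · rw [hxb]; exact b.linearIndependent
  · rw [hxb]; exact b.span_eq

end LiftBasis

namespace ZMod

variable {p n : ℕ}

theorem castHom_eq_zero_iff (hn : 1 ≤ n) (r : ZMod (p ^ n)) :
    castHom (dvd_pow_self p (by omega)) (ZMod p) r = 0 ↔ (p : ZMod (p ^ n)) ∣ r := by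
  obtain ⟨m, rfl⟩ := intCast_surjective r
  constructor
  · intro h
    obtain ⟨c, rfl⟩ := (intCast_zmod_eq_zero_iff_dvd m p).mp (by simpa using h)
    exact ⟨c, by push_cast; rfl⟩
  · rintro ⟨c, hc⟩
    rw [hc, map_mul, map_natCast, natCast_self, zero_mul]

theorem natCast_dvd_of_pow_mul_eq_zero (hp : p ≠ 0) {k : ℕ} (hk : k < n) (r : ZMod (p ^ n))
    (hr : (p : ZMod (p ^ n)) ^ k * r = 0) : (p : ZMod (p ^ n)) ∣ r := by
  obtain ⟨m, rfl⟩ := intCast_surjective r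
  have hdvd : (p : ℤ) ^ n ∣ p ^ k * m := by
    exact_mod_cast (intCast_zmod_eq_zero_iff_dvd (p ^ k * m) (p ^ n)).mp (by push_cast; exact hr)
  have : (p : ℤ) ^ k * p ∣ p ^ k * m := (pow_succ (p : ℤ) k ▸ pow_dvd_pow _ hk).trans hdvd
  obtain ⟨c, rfl⟩ := (mul_dvd_mul_iff_left (pow_ne_zero k (by exact_mod_cast hp))).mp this
  exact ⟨c, by push_cast; rfl⟩

end ZMod

universe u

theorem Module.Basis.mk_eq_continuum_of_fun_nat {K B : Type u} [Field K] [Finite K]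
    (b : Module.Basis B K (ℕ → K)) : #B = 𝔠 := by
  have := Fintype.ofFinite K
  rw [b.mk_eq_rank'', rank_fun_infinite, mk_arrow, mk_fintype, mk_denumerable, lift_natCast,
    lift_aleph0]
  exact nat_power_aleph0 Fintype.one_lt_card

theorem stmt_11 (p n : ℕ) (hp : p.Prime) (hn : 1 ≤ n)
    (I : Type) (hI : Cardinal.mk I = Cardinal.continuum) :
    Nonempty ((I →₀ ZMod (p ^ n)) ≃+ (ℕ → ZMod (p ^ n))) := by
  have : Fact p.Prime := ⟨hp⟩
  obtain ⟨B, b⟩ := Module.Free.exists_basis (ZMod p) (ℕ → ZMod p)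
  obtain ⟨b'⟩ := nonempty_basis_of_basis_compLeft (ZMod.ringHom_surjective _)
    (ZMod.castHom_eq_zero_iff hn) (by rw [← Nat.cast_pow, ZMod.natCast_self])
    (fun k hk => ZMod.natCast_dvd_of_pow_mul_eq_zero hp.ne_zero hk) b
  obtain ⟨e⟩ := Cardinal.eq.mp (hI.trans b.mk_eq_continuum_of_fun_nat.symm)
  exact ⟨((Finsupp.domLCongr e).trans b'.repr.symm).toAddEquiv⟩
end
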